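/- arXiv:1503.03164 — 11 statements merged into one kernel-verified Lean document; each statement's English description precedes it below -/
import Mathlib

section
/- Let p be a prime, let r, m, e be positive integers with e ≥ 2, and let (a_1,…,a_m) be an m-tuple of natural numbers with a_1+⋯+a_m = r(p^e−1). Then the following are equivalent: (i) there exist an integer e' with 1 ≤ e' ≤ e−1 and m-tuples of natural numbers (a'_1,…,a'_m) and (a''_1,…,a''_m) such that a_j = a'_j + p^{e'}·a''_j for every j, a'_1+⋯+a'_m = r(p^{e'}−1), and a''_1+⋯+a''_m = r(p^{e−e'}−1); (ii) there exists an integer e' with 1 ≤ e' ≤ e−1 such that (a_1 mod p^{e'}) + ⋯ + (a_m mod p^{e'}) ≤ r(p^{e'}−1). -/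
/-! Writing `a j = (a j % q) + q * (a j / q)` with `q = p ^ e'`, the digit sums satisfy
`∑ a j % q + q * ∑ a j / q = r (p^e - 1) = r (q - 1) + q * r (p^(e-e') - 1)`.
If `∑ a j % q ≤ r (q - 1)`, the deficit is a multiple `q * k` of `q`, and moving `k` units
from the quotients `a j / q` back into the remainders (as `q` each) produces the factorization.
Conversely, `a j % q ≤ a' j` for any such factorization. -/

open Finset

theorem exists_le_sum_eq_of_le_sum {ι : Type*} [Fintype ι] (b : ι → ℕ) {k : ℕ}
    (hk : k ≤ ∑ j, b j) : ∃ t ≤ b, ∑ j, t j = k := by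
  classical
  induction k with
  | zero => exact ⟨0, fun j => Nat.zero_le _, by simp⟩
  | succ k ih =>
    obtain ⟨t, ht, hsum⟩ := ih (by omega)
    obtain ⟨i, -, hi⟩ := exists_lt_of_sum_lt (s := univ) (f := t) (g := b) (by omega)
    refine ⟨t + Pi.single i 1, fun j => ?_, ?_⟩
    · by_cases hj : j = i
      · subst hj; simpa using hi
      · simpa [hj] using ht j
    · simp [sum_add_distrib, hsum]

section Split

variable {ι : Type*} [Fintype ι] {a : ι → ℕ} {q : ℕ}

theorem sum_mod_le_of_eq_add_mul {a' a'' : ι → ℕ} (h : ∀ j, a j = a' j + q * a'' j) :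
    ∑ j, a j % q ≤ ∑ j, a' j :=
  sum_le_sum fun j _ => by rw [h j, Nat.add_mul_mod_self_left]; exact Nat.mod_le _ _

theorem exists_eq_add_mul_of_sum_mod_le {S S' : ℕ} (hq : 0 < q)
    (hsum : ∑ j, a j = S + q * S') (hle : ∑ j, a j % q ≤ S) :
    ∃ a' a'' : ι → ℕ, (∀ j, a j = a' j + q * a'' j) ∧
      ∑ j, a' j = S ∧ ∑ j, a'' j = S' := by
  set s := ∑ j, a j % q
  set T := ∑ j, a j / q
  have hdigits : s + q * T = S + q * S' := by
    rw [← hsum, mul_sum, ← sum_add_distrib]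
    exact sum_congr rfl fun j _ => Nat.mod_add_div (a j) q
  have hS'T : S' ≤ T := by
    by_contra! h
    have : q * T < q * S' := Nat.mul_lt_mul_of_pos_left h hq
    omega
  have hdeficit : q * (T - S') = S - s := by rw [Nat.mul_sub]; omega
  obtain ⟨t, ht, htsum⟩ := exists_le_sum_eq_of_le_sum (fun j => a j / q) (Nat.sub_le T S')
  refine ⟨fun j => a j % q + q * t j, fun j => a j / q - t j, fun j => ?_, ?_, ?_⟩
  · have htj : t j ≤ a j / q := ht j
    rw [add_assoc, ← mul_add, Nat.add_sub_cancel' htj, Nat.mod_add_div]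
  · rw [sum_add_distrib, ← mul_sum, htsum]
    omega
  · have hT : ∑ j, (a j / q - t j) + ∑ j, t j = T := by
      rw [← sum_add_distrib]
      exact sum_congr rfl fun j _ => Nat.sub_add_cancel (ht j)
    dsimp only
    omega

end Split

theorem mul_pow_sub_one_eq_add {p : ℕ} (hp : 0 < p) (r : ℕ) {e e' : ℕ} (h : e' ≤ e) :
    r * (p ^ e - 1) = r * (p ^ e' - 1) + p ^ e' * (r * (p ^ (e - e') - 1)) := by
  have h1 : 1 ≤ p ^ e' := Nat.one_le_pow _ _ hp
  have h2 : 1 ≤ p ^ (e - e') := Nat.one_le_pow _ _ hp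
  have h3 : p ^ e = p ^ e' * p ^ (e - e') := by rw [← pow_add, Nat.add_sub_cancel' h]
  rw [h3]
  zify [h1, h2, one_le_mul h1 h2]
  ring

theorem stmt_0_general (p r m e : ℕ) (hp : p.Prime)
    (a : Fin m → ℕ) (ha : ∑ j, a j = r * (p ^ e - 1)) :
    (∃ e' : ℕ, 1 ≤ e' ∧ e' ≤ e - 1 ∧ ∃ a' a'' : Fin m → ℕ,
        (∀ j, a j = a' j + p ^ e' * a'' j) ∧
        (∑ j, a' j = r * (p ^ e' - 1)) ∧
        (∑ j, a'' j = r * (p ^ (e - e') - 1))) ↔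
    (∃ e' : ℕ, 1 ≤ e' ∧ e' ≤ e - 1 ∧ (∑ j, a j % p ^ e') ≤ r * (p ^ e' - 1)) := by
  constructor
  · rintro ⟨e', h1, h2, a', a'', hsplit, hsum', -⟩
    exact ⟨e', h1, h2, hsum' ▸ sum_mod_le_of_eq_add_mul hsplit⟩
  · rintro ⟨e', h1, h2, hle⟩
    have hsum := ha.trans (mul_pow_sub_one_eq_add hp.pos r (e' := e') (by omega))
    exact ⟨e', h1, h2, exists_eq_add_mul_of_sum_mod_le (pow_pos hp.pos e') hsum hle⟩

/-- factorization of a monomial of degree `r(p^e-1)` in the twisted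
ring `T(V_r(R[x_1,…,x_m]))` is equivalent to a truncation inequality. -/
theorem stmt_0 (p r m e : ℕ) (hp : p.Prime) (hr : 0 < r) (hm : 0 < m)
    (he : 2 ≤ e) (a : Fin m → ℕ) (ha : ∑ j, a j = r * (p ^ e - 1)) :
    (∃ e' : ℕ, 1 ≤ e' ∧ e' ≤ e - 1 ∧ ∃ a' a'' : Fin m → ℕ,
        (∀ j, a j = a' j + p ^ e' * a'' j) ∧
        (∑ j, a' j = r * (p ^ e' - 1)) ∧
        (∑ j, a'' j = r * (p ^ (e - e') - 1))) ↔
    (∃ e' : ℕ, 1 ≤ e' ∧ e' ≤ e - 1 ∧ (∑ j, a j % p ^ e') ≤ r * (p ^ e' - 1)) :=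
  stmt_0_general p r m e hp a ha
end

section
/- Let p be a prime and let r, m, e be positive integers with r ≥ m−1 and e ≥ 2. Then every m-tuple (a_1,…,a_m) of natural numbers with a_1+⋯+a_m = r(p^e−1) admits an integer e' with 1 ≤ e' ≤ e−1 such that (a_1 mod p^{e'})+⋯+(a_m mod p^{e'}) ≤ r(p^{e'}−1). Consequently c_{p,r,m,e} = 0 for all e ≥ 2. -/
/-- `cSeq p r m e` is the number of `m`-tuples `(a_1,…,a_m)` of natural numbers with
`a_1+⋯+a_m = r(p^e−1)` such that `(a_1 mod p^i)+⋯+(a_m mod p^i) ≥ r(p^i−1)+p^i`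
for every `1 ≤ i ≤ e−1`; this is the `e`-th term of the complexity sequence of
the ring `T(V_r(K[x_1,…,x_m]))` of Enescu–Yao. -/
noncomputable def cSeq (p r m e : ℕ) : ℕ :=
  Nat.card {a : Fin m → ℕ // (∑ j, a j = r * (p ^ e - 1)) ∧
    ∀ i, 1 ≤ i → i ≤ e - 1 → r * (p ^ i - 1) + p ^ i ≤ ∑ j, a j % p ^ i}


/-- if `r ≥ m−1` every monomial of degree `r(p^e−1)` factors, so the
complexity sequence vanishes for `e ≥ 2`. -/
theorem stmt_2 (p r m e : ℕ) (hp : p.Prime) (hr : 0 < r) (hm : 0 < m)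
    (hrm : m - 1 ≤ r) (he : 2 ≤ e) :
    (∀ a : Fin m → ℕ, ∑ j, a j = r * (p ^ e - 1) →
      ∃ e' : ℕ, 1 ≤ e' ∧ e' ≤ e - 1 ∧ (∑ j, a j % p ^ e') ≤ r * (p ^ e' - 1)) ∧
    cSeq p r m e = 0 := by
  have hp2 : 2 ≤ p := hp.two_le
  have main : ∀ a : Fin m → ℕ, ∑ j, a j = r * (p ^ e - 1) →
      ∃ e' : ℕ, 1 ≤ e' ∧ e' ≤ e - 1 ∧ (∑ j, a j % p ^ e') ≤ r * (p ^ e' - 1) := by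
    intro a ha
    refine ⟨e - 1, by omega, le_refl _, ?_⟩
    set q := e - 1 with hq
    set P := p ^ q with hP
    have hP1 : 1 ≤ P := Nat.one_le_pow _ _ (by omega)
    have hPe : 1 ≤ p ^ e := Nat.one_le_pow _ _ (by omega)
    set s := ∑ j, a j % P with hs
    -- s ≡ sum a ≡ r(p^e - 1) mod P, and P ∣ r * p^e, so P ∣ s + r
    have hmod : s % P = (r * (p ^ e - 1)) % P := by
      rw [hs, ← ha]; exact (Finset.sum_nat_mod _ _ _).symm
    have hre : r ≤ r * p ^ e := Nat.le_mul_of_pos_right r (by omega)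
    have h1 : r * (p ^ e - 1) + r = r * p ^ e := by
      rw [Nat.mul_sub_left_distrib, mul_one]; omega
    have h2 : P ∣ r * p ^ e := Dvd.dvd.mul_left (pow_dvd_pow p (by omega)) r
    have hdvd : P ∣ s + r := by
      apply Nat.dvd_of_mod_eq_zero
      rw [Nat.add_mod, hmod, ← Nat.add_mod, h1]
      obtain ⟨c, hc⟩ := h2
      rw [hc]; exact Nat.mul_mod_right P c
    obtain ⟨k, hk⟩ := hdvd
    by_cases hkr : k ≤ r
    · have h5 : P * k ≤ P * r := Nat.mul_le_mul_left P hkr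
      have hrP : r ≤ r * P := Nat.le_mul_of_pos_right r (by omega)
      have h6 : r * (P - 1) + r = r * P := by
        rw [Nat.mul_sub_left_distrib, mul_one]; omega
      have h7 : r * P = P * r := mul_comm r P
      omega
    · exfalso
      have hsum_le : s ≤ m * (P - 1) := by
        calc s ≤ ∑ _j : Fin m, (P - 1) :=
              Finset.sum_le_sum (fun j _ => by
                have := Nat.mod_lt (a j) (show 0 < P by omega); omega)
          _ = m * (P - 1) := by simp [Finset.sum_const, mul_comm]
      have hsum_le' : s ≤ (r + 1) * (P - 1) :=
        hsum_le.trans (Nat.mul_le_mul_right _ (by omega))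
      have h8 : P * (r + 1) ≤ P * k := Nat.mul_le_mul_left P (by omega)
      have hrP : (r + 1) ≤ (r + 1) * P := Nat.le_mul_of_pos_right _ (by omega)
      have h9 : (r + 1) * (P - 1) + (r + 1) = (r + 1) * P := by
        rw [Nat.mul_sub_left_distrib, mul_one]; omega
      have h10 : (r + 1) * P = P * (r + 1) := mul_comm _ _
      omega
  refine ⟨main, ?_⟩
  rw [cSeq, Nat.card_eq_zero]
  left
  rw [isEmpty_subtype]
  rintro a ⟨ha, hall⟩
  obtain ⟨e', h1, h2, h3⟩ := main a ha
  have h4 := hall e' h1 h2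
  have : 1 ≤ p ^ e' := Nat.one_le_pow _ _ (by omega)
  omega
end

section
/- Let p be a prime and let r, m, e be positive integers with m ≥ r+2 and e ≥ 2. Define the m-tuple (a_1,…,a_m) of natural numbers by a_j = p^e−1 for 1 ≤ j ≤ r−1, a_r = p^e−p^{e−1}−1, a_{r+1} = p^{e−1}−1, a_{r+2} = 1, and a_j = 0 for r+2 < j ≤ m. Then a_1+⋯+a_m = r(p^e−1), and for every integer 1 ≤ i ≤ e−1 one has (a_1 mod p^i)+⋯+(a_m mod p^i) = r(p^i−1)+p^i. In particular c_{p,r,m,e} ≥ 1. -/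
lemma mod_helper (t q : ℕ) (ht : 1 ≤ t) (hq : 1 ≤ q) : (t * q - 1) % t = t - 1 := by
  obtain ⟨q', rfl⟩ := Nat.exists_eq_add_of_le hq
  have h1 : t * (1 + q') = t + q' * t := by ring
  have h2 : t * (1 + q') - 1 = (t - 1) + q' * t := by omega
  rw [h2, Nat.add_mul_mod_self_right, Nat.mod_eq_of_lt (by omega)]

lemma sum_piece (s m A B C D : ℕ) (hm : s + 3 ≤ m) :
    ∑ j ∈ Finset.range m,
      (if j + 1 ≤ s then A else if j + 1 = s + 1 then B
        else if j + 1 = s + 2 then C else if j + 1 = s + 3 then D else 0)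
      = s * A + B + C + D := by
  rw [← Finset.sum_subset (Finset.range_subset_range.2 hm)
    (by intro x hx hx2; simp only [Finset.mem_range] at hx hx2
        have : s + 3 ≤ x := by omega
        split_ifs with h1 h2 h3 h4 <;> omega)]
  rw [show s + 3 = s + 2 + 1 from rfl, Finset.sum_range_succ,
    show s + 2 = s + 1 + 1 from rfl, Finset.sum_range_succ, Finset.sum_range_succ]
  have hs : ∑ j ∈ Finset.range s,
      (if j + 1 ≤ s then A else if j + 1 = s + 1 then B
        else if j + 1 = s + 2 then C else if j + 1 = s + 3 then D else 0)
      = s * A := by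
    rw [Finset.sum_congr rfl (fun j hj => ?_), Finset.sum_const, Finset.card_range,
      smul_eq_mul]
    simp only [Finset.mem_range] at hj
    rw [if_pos (by omega)]
  rw [hs]
  split_ifs with h1 h2 h3 h4 h5 h6 h7 h8 h9 <;> omega

/-- an explicit monomial of degree `r(p^e−1)` whose carry-overs are all
exactly one more than allowed, so `c_{p,r,m,e} ≥ 1` when `m ≥ r+2`. -/
theorem stmt_3 (p r m e : ℕ) (hp : p.Prime) (hr : 0 < r) (he : 2 ≤ e)
    (hm : r + 2 ≤ m) (a : Fin m → ℕ)
    (hadef : ∀ j : Fin m,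
      a j = if (j : ℕ) + 1 ≤ r - 1 then p ^ e - 1
        else if (j : ℕ) + 1 = r then p ^ e - p ^ (e - 1) - 1
        else if (j : ℕ) + 1 = r + 1 then p ^ (e - 1) - 1
        else if (j : ℕ) + 1 = r + 2 then 1
        else 0) :
    (∑ j, a j = r * (p ^ e - 1)) ∧
    (∀ i, 1 ≤ i → i ≤ e - 1 → (∑ j, a j % p ^ i) = r * (p ^ i - 1) + p ^ i) ∧
    1 ≤ cSeq p r m e := by
  have hp2 : 2 ≤ p := hp.two_le
  have hpe1 : 1 ≤ p ^ (e - 1) := Nat.one_le_pow _ _ (by omega)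
  have hpee : p ^ e = p * p ^ (e - 1) := by
    conv_lhs => rw [show e = (e - 1) + 1 by omega]
    rw [pow_succ, mul_comm]
  obtain ⟨s, rfl⟩ : ∃ s, r = s + 1 := ⟨r - 1, by omega⟩
  have hcond : ∀ j : ℕ, (j + 1 ≤ s + 1 - 1 ↔ j + 1 ≤ s) := fun j => by omega
  -- Part 1: the total degree
  have hsum : ∑ j, a j = (s + 1) * (p ^ e - 1) := by
    have h1 : ∑ j : Fin m, a j = ∑ j ∈ Finset.range m,
        (if j + 1 ≤ s then p ^ e - 1
          else if j + 1 = s + 1 then p ^ e - p ^ (e - 1) - 1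
          else if j + 1 = s + 2 then p ^ (e - 1) - 1
          else if j + 1 = s + 3 then 1 else 0) := by
      rw [← Fin.sum_univ_eq_sum_range]
      refine Finset.sum_congr rfl fun j _ => ?_
      rw [hadef j]
      simp only [hcond, show s + 1 + 1 = s + 2 from rfl, show s + 1 + 2 = s + 3 from rfl]
    rw [h1, sum_piece s m _ _ _ _ (by omega)]
    have hB : p ^ e - p ^ (e - 1) - 1 + (p ^ (e - 1) - 1) + 1 = p ^ e - 1 := by
      have : 2 * p ^ (e - 1) ≤ p ^ e := by
        rw [hpee]; exact Nat.mul_le_mul_right _ hp2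
      omega
    have : s * (p ^ e - 1) + (p ^ e - p ^ (e - 1) - 1) + (p ^ (e - 1) - 1) + 1
        = s * (p ^ e - 1) + (p ^ e - 1) := by omega
    rw [this]; ring
  -- Part 2: the mod sums
  have hmod : ∀ i, 1 ≤ i → i ≤ e - 1 →
      (∑ j, a j % p ^ i) = (s + 1) * (p ^ i - 1) + p ^ i := by
    intro i hi1 hi2
    have hpi1 : 1 ≤ p ^ i := Nat.one_le_pow _ _ (by omega)
    have hpi2 : 2 ≤ p ^ i := by
      calc 2 = 2 ^ 1 := rfl
      _ ≤ p ^ i := Nat.pow_le_pow_left hp2 1 |>.trans (Nat.pow_le_pow_right (by omega) hi1)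
    have key1 : (p ^ e - 1) % p ^ i = p ^ i - 1 := by
      rw [show p ^ e = p ^ i * p ^ (e - i) by rw [← pow_add]; congr 1; omega]
      exact mod_helper _ _ hpi1 (Nat.one_le_pow _ _ (by omega))
    have key2 : (p ^ e - p ^ (e - 1) - 1) % p ^ i = p ^ i - 1 := by
      have hq : p ^ (e - 1 - i) < p ^ (e - i) :=
        Nat.pow_lt_pow_right hp.one_lt (by omega)
      rw [show p ^ e - p ^ (e - 1) = p ^ i * (p ^ (e - i) - p ^ (e - 1 - i)) by
        rw [Nat.mul_sub, ← pow_add, ← pow_add]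
        congr 2 <;> omega]
      exact mod_helper _ _ hpi1 (by omega)
    have key3 : (p ^ (e - 1) - 1) % p ^ i = p ^ i - 1 := by
      rw [show p ^ (e - 1) = p ^ i * p ^ (e - 1 - i) by rw [← pow_add]; congr 1; omega]
      exact mod_helper _ _ hpi1 (Nat.one_le_pow _ _ (by omega))
    have key4 : 1 % p ^ i = 1 := Nat.mod_eq_of_lt (by omega)
    have h1 : ∑ j : Fin m, a j % p ^ i = ∑ j ∈ Finset.range m,
        (if j + 1 ≤ s then p ^ i - 1
          else if j + 1 = s + 1 then p ^ i - 1
          else if j + 1 = s + 2 then p ^ i - 1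
          else if j + 1 = s + 3 then 1 else 0) := by
      rw [← Fin.sum_univ_eq_sum_range]
      refine Finset.sum_congr rfl fun j _ => ?_
      rw [hadef j]
      simp only [hcond, show s + 1 + 1 = s + 2 from rfl, show s + 1 + 2 = s + 3 from rfl]
      split_ifs with h1 h2 h3 h4 <;>
        first
          | exact key1
          | exact key2
          | exact key3
          | exact key4
          | exact Nat.zero_mod _
    rw [h1, sum_piece s m _ _ _ _ (by omega)]
    have : s * (p ^ i - 1) + (p ^ i - 1) = (s + 1) * (p ^ i - 1) := by ring
    omega
  refine ⟨hsum, hmod, ?_⟩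
  -- Part 3: positivity of the count
  unfold cSeq
  set N := (s + 1) * (p ^ e - 1) with hN
  haveI : Finite {a : Fin m → ℕ // (∑ j, a j = (s + 1) * (p ^ e - 1)) ∧
      ∀ i, 1 ≤ i → i ≤ e - 1 →
        (s + 1) * (p ^ i - 1) + p ^ i ≤ ∑ j, a j % p ^ i} := by
    have hbound : ∀ (x : {a : Fin m → ℕ // (∑ j, a j = (s + 1) * (p ^ e - 1)) ∧
        ∀ i, 1 ≤ i → i ≤ e - 1 →
          (s + 1) * (p ^ i - 1) + p ^ i ≤ ∑ j, a j % p ^ i}) (j : Fin m),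
        x.1 j < N + 1 := by
      intro x j
      have : x.1 j ≤ ∑ k, x.1 k :=
        Finset.single_le_sum (fun k _ => Nat.zero_le _) (Finset.mem_univ j)
      have h2 := x.2.1
      omega
    apply Finite.of_injective (fun x (j : Fin m) => (⟨x.1 j, hbound x j⟩ : Fin (N + 1)))
    intro x y h
    apply Subtype.ext
    funext j
    have := congrFun h j
    simpa using this
  haveI : Nonempty {a : Fin m → ℕ // (∑ j, a j = (s + 1) * (p ^ e - 1)) ∧
      ∀ i, 1 ≤ i → i ≤ e - 1 →
        (s + 1) * (p ^ i - 1) + p ^ i ≤ ∑ j, a j % p ^ i} :=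
    ⟨⟨a, hsum, fun i h1 h2 => (hmod i h1 h2).ge⟩⟩
  exact Nat.card_pos
end

section
/- Let p be a prime and let r, m be positive integers. Then c_{p,r,m,e} = 0 for every integer e ≥ 2 if and only if r ≥ m−1. (Equivalently: the ring T(V_r(R[x_1,…,x_m])) is finitely generated over R if and only if r ≥ m−1.) -/
/-- The witness sequence for the forward direction. -/
private def Awit (p r : ℕ) : ℕ → ℕ :=
  fun j => if j = 0 then (p-1)*(r*p-1) else if j ≤ r+1 then p-1 else 0

private lemma finite_aux {m N : ℕ} (P : (Fin m → ℕ) → Prop) :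
    Finite {a : Fin m → ℕ // (∑ j, a j = N) ∧ P a} := by
  have hb : ∀ (a : {a : Fin m → ℕ // (∑ j, a j = N) ∧ P a}) (j : Fin m),
      a.1 j < N + 1 := by
    intro a j
    have h1 := Finset.single_le_sum (f := a.1) (fun i _ => Nat.zero_le _) (Finset.mem_univ j)
    have h2 := a.2.1
    omega
  apply Finite.of_injective (fun a => (fun j => (⟨a.1 j, hb a j⟩ : Fin (N+1)) : Fin m → Fin (N+1)))
  intro a b h
  apply Subtype.ext
  funext j
  exact congrArg Fin.val (congrFun h j)

private lemma modfact {p r : ℕ} (hp : 2 ≤ p) (hr : 1 ≤ r) :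
    (p-1)*(r*p-1) % p = 1 := by
  have h1 : 1 ≤ r * p := by nlinarith
  have h2 : 1 ≤ r * (p-1) := by
    have : 1*1 ≤ r*(p-1) := Nat.mul_le_mul hr (by omega)
    omega
  have key : (p-1)*(r*p-1) = p*(r*(p-1)-1) + 1 := by
    zify [show 1 ≤ p by omega, h1, h2]
    ring
  rw [key, Nat.mul_add_mod]
  exact Nat.mod_eq_of_lt (by omega)

private lemma sumA {p r m : ℕ} (hp : 2 ≤ p) (hr : 1 ≤ r) (hm : r + 2 ≤ m) :
    ∑ j : Fin m, Awit p r j.val = r * (p ^ 2 - 1) := by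
  rw [Fin.sum_univ_eq_sum_range]
  rw [← Finset.sum_subset (Finset.range_subset_range.2 hm)
    (by intro x _ hnx; simp only [Finset.mem_range, not_lt] at hnx
        simp only [Awit]; rw [if_neg (by omega), if_neg (by omega)])]
  rw [Finset.sum_range_succ']
  have hc : ∀ i ∈ Finset.range (r+1), Awit p r (i+1) = p - 1 := by
    intro i hi
    simp only [Finset.mem_range] at hi
    simp only [Awit]
    rw [if_neg (by omega), if_pos (by omega)]
  rw [Finset.sum_congr rfl hc, Finset.sum_const, Finset.card_range, smul_eq_mul]
  rw [show Awit p r 0 = (p-1)*(r*p-1) from if_pos rfl]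
  have h1 : 1 ≤ r * p := by nlinarith
  have h2 : 1 ≤ p ^ 2 := Nat.one_le_pow 2 p (by omega)
  zify [show 1 ≤ p by omega, h1, h2]
  ring

private lemma sumB {p r m : ℕ} (hp : 2 ≤ p) (hr : 1 ≤ r) (hm : r + 2 ≤ m) :
    ∑ j : Fin m, Awit p r j.val % p = r * (p - 1) + p := by
  rw [Fin.sum_univ_eq_sum_range (fun j => Awit p r j % p)]
  rw [← Finset.sum_subset (Finset.range_subset_range.2 hm)
    (by intro x _ hnx; simp only [Finset.mem_range, not_lt] at hnx
        simp only [Awit]; rw [if_neg (by omega), if_neg (by omega)]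
        exact Nat.zero_mod p)]
  rw [Finset.sum_range_succ']
  have hc : ∀ i ∈ Finset.range (r+1), Awit p r (i+1) % p = p - 1 := by
    intro i hi
    simp only [Finset.mem_range] at hi
    simp only [Awit]
    rw [if_neg (by omega), if_pos (by omega)]
    exact Nat.mod_eq_of_lt (by omega)
  rw [Finset.sum_congr rfl hc, Finset.sum_const, Finset.card_range, smul_eq_mul]
  rw [show Awit p r 0 = (p-1)*(r*p-1) from if_pos rfl]
  rw [modfact hp hr]
  zify [show 1 ≤ p by omega]
  ring



/-- the complexity sequence vanishes for all `e ≥ 2` if and only if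
`r ≥ m−1` (equivalently, `T(V_r(R[x_1,…,x_m]))` is finitely generated over `R`
if and only if `r ≥ m−1`). -/
theorem stmt_4 (p r m : ℕ) (hp : p.Prime) (hr : 0 < r) (hm : 0 < m) :
    (∀ e, 2 ≤ e → cSeq p r m e = 0) ↔ m - 1 ≤ r := by
  have hp2 : 2 ≤ p := hp.two_le
  constructor
  · intro h
    by_contra hc
    have hm2 : r + 2 ≤ m := by omega
    have h2 := h 2 le_rfl
    unfold cSeq at h2
    rw [Nat.card_eq_zero] at h2
    rcases h2 with he | hi
    · refine he.false ⟨fun j => Awit p r j.val, sumA hp2 hr hm2, ?_⟩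
      intro i h1 h2
      have : i = 1 := by omega
      subst this
      rw [pow_one, sumB hp2 hr hm2]
    · exact absurd hi (finite_aux _).not_infinite
  · intro h e he
    unfold cSeq
    rw [Nat.card_eq_zero]
    left
    constructor
    rintro ⟨a, hsum, hcond⟩
    have hcond1 := hcond 1 le_rfl (by omega)
    rw [pow_one] at hcond1
    have hbd : ∑ j, a j % p ≤ m * (p - 1) := by
      calc ∑ j, a j % p ≤ ∑ _j : Fin m, (p - 1) :=
            Finset.sum_le_sum (fun j _ => by
              have := Nat.mod_lt (a j) (show 0 < p by omega); omega)
        _ = m * (p - 1) := by rw [Finset.sum_const, Finset.card_univ, Fintype.card_fin, smul_eq_mul]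
    have hmr : m ≤ r + 1 := by omega
    have : m * (p - 1) ≤ (r + 1) * (p - 1) := Nat.mul_le_mul_right _ hmr
    have hlt : (r + 1) * (p - 1) < r * (p - 1) + p := by
      rw [add_mul, one_mul]; omega
    omega
end

section
/- Let p be a prime, let r, m, e be positive integers with e ≥ 2, let α = (a_1,…,a_m) be an m-tuple of natural numbers, and let d_{e−1},…,d_1 be integers; set d_0 := 0. Then the following are equivalent: (i) a_1+⋯+a_m = r(p^e−1) and d_i(α) = d_i for every 1 ≤ i ≤ e−1; (ii) ⌊a_1/p^{e−1}⌋ + ⋯ + ⌊a_m/p^{e−1}⌋ = r(p−1) − d_{e−1}, and for every 0 ≤ i ≤ e−2 the sum of the i-th base-p digits of a_1,…,a_m (that is, (⌊a_1/p^i⌋ mod p) + ⋯ + (⌊a_m/p^i⌋ mod p)) equals r(p−1) + d_{i+1}·p − d_i (equalities of integers). -/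
/-- `dArr p r a i` is the integer `d_i(α) = ⌊((a_1 mod p^i)+⋯+(a_m mod p^i))/p^i⌋ − ⌊r(p^i−1)/p^i⌋`
for `α = (a_1,…,a_m)`. -/
def dArr (p r : ℕ) {m : ℕ} (a : Fin m → ℕ) (i : ℕ) : ℤ :=
  (((∑ j, a j % p ^ i) / p ^ i : ℕ) : ℤ) - (((r * (p ^ i - 1)) / p ^ i : ℕ) : ℤ)

/-!
Write `A i = ∑ⱼ ⌊aⱼ / p^i⌋`. Since `∑ⱼ aⱼ = p^i A i + ∑ⱼ (aⱼ mod p^i)`, the sum condition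
`∑ⱼ aⱼ = r(p^e - 1)` gives `d_i(α) = r(p^(e-i) - 1) - A i` for `i ≤ e`, so (i) says exactly that
`A i = r(p^(e-i) - 1) - d_i` for all `i ≤ e - 1` (at `i = 0` this is the sum condition, as `d_0 = 0`).
Splitting off the `i`-th digits gives `A i = p A (i+1) + (digit sum at i)`, and by downward
induction from `i = e - 1` that family of equations is equivalent to (ii).
-/

section DigitSums

variable {ι : Type*} [Fintype ι]

theorem sum_div_eq_sum_div_add_sum_mod_div (a : ι → ℕ) {q : ℕ} (hq : 0 < q) :
    (∑ j, a j) / q = ∑ j, a j / q + (∑ j, a j % q) / q := by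
  have hsum : ∑ j, a j = q * ∑ j, a j / q + ∑ j, a j % q := by
    rw [Finset.mul_sum, ← Finset.sum_add_distrib]
    exact Finset.sum_congr rfl fun j _ => (Nat.div_add_mod (a j) q).symm
  rw [hsum, Nat.mul_add_div hq]

theorem sum_div_pow_eq_mul_sum_div_pow_succ_add (a : ι → ℕ) (p i : ℕ) :
    ∑ j, a j / p ^ i = p * ∑ j, a j / p ^ (i + 1) + ∑ j, a j / p ^ i % p := by
  rw [Finset.mul_sum, ← Finset.sum_add_distrib]
  refine Finset.sum_congr rfl fun j _ => ?_
  rw [pow_succ, ← Nat.div_div_eq_div_mul]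
  exact (Nat.div_add_mod (a j / p ^ i) p).symm

end DigitSums

theorem mul_mul_sub_one_div {q t : ℕ} (r : ℕ) (hq : 0 < q) (ht : 0 < t) :
    r * (q * t - 1) / q = r * (t - 1) + r * (q - 1) / q := by
  obtain ⟨t, rfl⟩ : ∃ t', t = t' + 1 := ⟨t - 1, by omega⟩
  have hsplit : r * (q * (t + 1) - 1) = r * (q - 1) + q * (r * t) := by
    rw [show q * (t + 1) - 1 = (q - 1) + q * t by rw [mul_add_one]; omega]
    ring
  rw [hsplit, Nat.add_mul_div_left _ _ hq, Nat.add_sub_cancel, add_comm]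

theorem forall_le_eq_iff_of_eq_mul_add (p r : ℤ) (A c d : ℕ → ℤ) (n : ℕ)
    (hrec : ∀ i, A i = p * A (i + 1) + c i) :
    (∀ i ≤ n, A i = r * (p ^ (n - i + 1) - 1) - d i) ↔
      A n = r * (p - 1) - d n ∧ ∀ i < n, c i = r * (p - 1) + d (i + 1) * p - d i := by
  constructor
  · intro hA
    refine ⟨by simpa using hA n le_rfl, fun i hi => ?_⟩
    have hexp : n - i + 1 = n - (i + 1) + 1 + 1 := by omega
    have hAi := hA i hi.le
    rw [hexp, pow_succ] at hAi
    linear_combination hAi - p * hA (i + 1) hi - hrec i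
  · rintro ⟨htop, hc⟩ i hi
    induction hi using Nat.decreasingInduction with
    | self => simpa using htop
    | of_succ k hk ih =>
      have hexp : n - k + 1 = n - (k + 1) + 1 + 1 := by omega
      rw [hexp, pow_succ]
      linear_combination hrec k + p * ih + hc k hk

theorem natCast_mul_pow_sub_one {p : ℕ} (r k : ℕ) (hp : 0 < p) :
    ((r * (p ^ k - 1) : ℕ) : ℤ) = r * ((p : ℤ) ^ k - 1) := by
  push_cast [Nat.one_le_pow _ _ hp]
  rfl

theorem dArr_eq_of_sum_eq {p r m e i : ℕ} {a : Fin m → ℕ} (hp : 0 < p)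
    (hsum : ∑ j, a j = r * (p ^ e - 1)) (hi : i ≤ e) :
    dArr p r a i = r * ((p : ℤ) ^ (e - i) - 1) - ((∑ j, a j / p ^ i : ℕ) : ℤ) := by
  have hpow : p ^ i * p ^ (e - i) = p ^ e := by rw [← pow_add, Nat.add_sub_cancel' hi]
  have hfloor := sum_div_eq_sum_div_add_sum_mod_div a (pow_pos hp i)
  rw [hsum, ← hpow, mul_mul_sub_one_div r (pow_pos hp i) (pow_pos hp (e - i))] at hfloor
  have hcast : ((r * (p ^ (e - i) - 1) : ℕ) : ℤ) + ((r * (p ^ i - 1) / p ^ i : ℕ) : ℤ) =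
      ((∑ j, a j / p ^ i : ℕ) : ℤ) + (((∑ j, a j % p ^ i) / p ^ i : ℕ) : ℤ) := by
    exact_mod_cast hfloor
  rw [natCast_mul_pow_sub_one r _ hp] at hcast
  unfold dArr
  linarith

theorem sum_eq_and_dArr_eq_iff {p r m e : ℕ} (a : Fin m → ℕ) (d : ℕ → ℤ) (hp : 0 < p)
    (he : 1 ≤ e) (hd0 : d 0 = 0) :
    ((∑ j, a j = r * (p ^ e - 1)) ∧ ∀ i, 1 ≤ i → i ≤ e - 1 → dArr p r a i = d i) ↔
      ∀ i ≤ e - 1, ((∑ j, a j / p ^ i : ℕ) : ℤ) = r * ((p : ℤ) ^ (e - 1 - i + 1) - 1) - d i := by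
  constructor
  · rintro ⟨hsum, hd⟩ i hi
    rw [show e - 1 - i + 1 = e - i by omega]
    rcases Nat.eq_zero_or_pos i with rfl | hi0
    · simp [hsum, hd0, Nat.one_le_pow _ _ hp]
    · linarith [dArr_eq_of_sum_eq hp hsum (i := i) (by omega), hd i hi0 hi]
  · intro hA
    have hsum : ∑ j, a j = r * (p ^ e - 1) := by
      have h0 := hA 0 (Nat.zero_le _)
      rw [show e - 1 - 0 + 1 = e by omega, hd0] at h0
      simp only [pow_zero, Nat.div_one, sub_zero] at h0
      exact_mod_cast h0.trans (natCast_mul_pow_sub_one r e hp).symm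
    refine ⟨hsum, fun i hi0 hi => ?_⟩
    have hAi := hA i hi
    rw [show e - 1 - i + 1 = e - i by omega] at hAi
    rw [dArr_eq_of_sum_eq hp hsum (by omega), hAi]
    ring

theorem stmt_5_general (p r m e : ℕ) (hp : p.Prime)
    (he : 2 ≤ e) (a : Fin m → ℕ) (d : ℕ → ℤ) (hd0 : d 0 = 0) :
    ((∑ j, a j = r * (p ^ e - 1)) ∧
        ∀ i, 1 ≤ i → i ≤ e - 1 → dArr p r a i = d i) ↔
    (((∑ j, a j / p ^ (e - 1) : ℕ) : ℤ) = (r : ℤ) * (p - 1) - d (e - 1) ∧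
      ∀ i, i ≤ e - 2 →
        ((∑ j, (a j / p ^ i) % p : ℕ) : ℤ) =
          (r : ℤ) * (p - 1) + d (i + 1) * p - d i) := by
  rw [sum_eq_and_dArr_eq_iff a d hp.pos (by omega) hd0,
    forall_le_eq_iff_of_eq_mul_add p r (fun i => ((∑ j, a j / p ^ i : ℕ) : ℤ))
      (fun i => ((∑ j, a j / p ^ i % p : ℕ) : ℤ)) d (e - 1)
      (fun i => by exact_mod_cast sum_div_pow_eq_mul_sum_div_pow_succ_add a p i)]
  exact and_congr_right' (forall_congr' fun i => imp_congr_left (by omega))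

/-- the carry-over data `d_i(α)` of an `m`-tuple summing to `r(p^e−1)`
is characterized by the digit-sum equations. -/
theorem stmt_5 (p r m e : ℕ) (hp : p.Prime) (hr : 0 < r) (hm : 0 < m)
    (he : 2 ≤ e) (a : Fin m → ℕ) (d : ℕ → ℤ) (hd0 : d 0 = 0) :
    ((∑ j, a j = r * (p ^ e - 1)) ∧
        ∀ i, 1 ≤ i → i ≤ e - 1 → dArr p r a i = d i) ↔
    (((∑ j, a j / p ^ (e - 1) : ℕ) : ℤ) = (r : ℤ) * (p - 1) - d (e - 1) ∧
      ∀ i, i ≤ e - 2 →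
        ((∑ j, (a j / p ^ i) % p : ℕ) : ℤ) =
          (r : ℤ) * (p - 1) + d (i + 1) * p - d i) :=
  stmt_5_general p r m e hp he a d hd0
end

section
/- Let p be a prime and let r, m, e be positive integers with m ≥ r+2 and e ≥ 2. Then c_{p,r,m,e} = ∑ P_m(r(p−1)−d_{e−1}) · ∏_{i=0}^{e−2} M_{p,m}(r(p−1)+d_{i+1}·p−d_i), where the sum ranges over all (e−1)-tuples (d_{e−1},…,d_1) of integers with 1 ≤ d_i ≤ m−r−1 for every 1 ≤ i ≤ e−1, and where d_0 := 0. -/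
/-- `Mpm p m i` is the number of `m`-tuples `(b_1,…,b_m)` of integers with
`0 ≤ b_j ≤ p−1` and `b_1+⋯+b_m = i`; it is the coefficient of `t^i` in
`(1+t+⋯+t^{p−1})^m`. -/
def Mpm (p m : ℕ) (i : ℤ) : ℕ :=
  (Finset.univ.filter (fun b : Fin m → Fin p => (∑ j, ((b j : ℕ) : ℤ)) = i)).card


/-- `Pm m k = binom(k+m−1, m−1)` for `k ≥ 0`, and `0` for `k < 0`. -/
def Pm (m : ℕ) (k : ℤ) : ℕ :=
  if 0 ≤ k then (k.toNat + m - 1).choose (m - 1) else 0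


/-- `dExt e d` extends the tuple `(d_1,…,d_{e−1})` to a function on `ℕ`, with
`d_0 = 0` and value `0` outside `[1, e−1]`. -/
def dExt (e : ℕ) (d : Fin (e - 1) → ℕ) (i : ℕ) : ℤ :=
  if h : 1 ≤ i ∧ i ≤ e - 1 then (d ⟨i - 1, by omega⟩ : ℤ) else 0

/-!
Write `s_i = ∑ⱼ (aⱼ mod p^i)`, let `Q = ∑ⱼ ⌊aⱼ / p^(e-1)⌋`, and let `B_k` be the sum of the `k`-th
base-`p` digits of the `aⱼ`. If `∑ⱼ aⱼ = r(p^e - 1)` then `s_i ≡ -r (mod p^i)`, so the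
conditions defining `c_{p,r,m,e}` say exactly that `s_i = r(p^i - 1) + d_i p^i` with
`1 ≤ d_i ≤ m - r - 1`, the upper bound coming from `s_i ≤ m(p^i - 1)`. These carries `d_i` are
determined by the tuple, and since `s_{k+1} = s_k + B_k p^k` they are prescribed by the digit sums
`B_k = r(p - 1) + d_{k+1} p - d_k` together with `Q = r(p - 1) - d_{e-1}`. Splitting each `aⱼ`
into its quotient by `p^(e-1)` and its low digits, the tuples with given carries are counted by
stars and bars for the quotients (`P_m(Q)`) times `M_{p,m}(B_k)` for each digit position.
-/

open Finset

lemma Nat.card_exists_mem_eq_sum {α ι : Type*} (T : Finset ι) (R : ι → α → Prop)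
    [∀ i, Finite {a // R i a}] (hR : ∀ a i j, R i a → R j a → i = j) :
    Nat.card {a // ∃ i ∈ T, R i a} = ∑ i ∈ T, Nat.card {a // R i a} := by
  let e : {a // ∃ i ∈ T, R i a} ≃ Σ i : T, {a // R i a} :=
    { toFun := fun a => ⟨⟨a.2.choose, a.2.choose_spec.1⟩, a.1, a.2.choose_spec.2⟩
      invFun := fun x => ⟨x.2.1, x.1.1, x.1.2, x.2.2⟩
      left_inv := fun _ => rfl
      right_inv := fun ⟨⟨i, _⟩, a, ha⟩ => Sigma.subtype_ext
        (Subtype.ext (hR a _ i (Exists.choose_spec (p := fun i => i ∈ T ∧ R i a) _).2 ha)) rfl }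
  rw [Nat.card_congr e, Nat.card_sigma, Finset.sum_coe_sort T fun i => Nat.card {a // R i a}]

lemma forall_partialSum_eq_iff {R : Type*} [CommRing R] [NoZeroDivisors R] {x : R} (hx : x ≠ 0)
    (c : R) {s B D : ℕ → R} (hs0 : s 0 = 0) (hD0 : D 0 = 0)
    (hs : ∀ k, s (k + 1) = s k + x ^ k * B k) (n : ℕ) :
    (∀ k < n, B k = c * (x - 1) + D (k + 1) * x - D k) ↔
      ∀ i ≤ n, s i = c * (x ^ i - 1) + D i * x ^ i := by
  constructor
  · intro hB i hi
    induction i with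
    | zero => simp [hs0, hD0]
    | succ i ih =>
      rw [hs, ih (by omega), hB i (by omega)]
      ring
  · intro h k hk
    refine mul_left_cancel₀ (pow_ne_zero k hx) ?_
    linear_combination (hs k).symm + h (k + 1) hk - h k hk.le

lemma natCard_tuple_sum_eq (m n : ℕ) :
    Nat.card {q : Fin m → ℕ // ∑ j, q j = n} = Nat.multichoose m n := by
  rw [← Nat.card_congr (Sym.equivNatSumOfFintype (Fin m) n), Sym.natCard_sym_eq_multichoose,
    Nat.card_eq_fintype_card, Fintype.card_fin]

instance (m n : ℕ) : Finite {q : Fin m → ℕ // ∑ j, q j = n} :=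
  .of_equiv _ (Sym.equivNatSumOfFintype (Fin m) n)

section Digits

variable (p E : ℕ) [NeZero p]

def divPowDigitsEquiv : ℕ ≃ ℕ × (Fin E → Fin p) :=
  (Nat.divModEquiv (p ^ E)).trans ((Equiv.refl ℕ).prodCongr finFunctionFinEquiv.symm)

@[simp]
lemma divPowDigitsEquiv_apply_fst (a : ℕ) : (divPowDigitsEquiv p E a).1 = a / p ^ E := rfl

@[simp]
lemma divPowDigitsEquiv_apply_snd_val (a : ℕ) (k : Fin E) :
    ((divPowDigitsEquiv p E a).2 k : ℕ) = a / p ^ (k : ℕ) % p := by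
  have hE : p ^ E = p ^ (k : ℕ) * p ^ (E - k) := by rw [← pow_add]; congr 1; omega
  change a % p ^ E / p ^ (k : ℕ) % p = _
  rw [hE, Nat.mod_mul_right_div_self,
    Nat.mod_mod_of_dvd _ (dvd_pow_self p (Nat.sub_ne_zero_of_lt k.isLt))]

variable (m : ℕ)

def tupleDivPowDigitsEquiv : (Fin m → ℕ) ≃ (Fin m → ℕ) × (Fin E → Fin m → Fin p) :=
  (Equiv.piCongrRight fun _ => divPowDigitsEquiv p E).trans
    ((Equiv.arrowProdEquivProdArrow _ _ _).trans ((Equiv.refl _).prodCongr (Equiv.piComm _)))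

end Digits

lemma Pm_eq_natCard {m : ℕ} (hm : 0 < m) (Q : ℤ) :
    Pm m Q = Nat.card {q : Fin m → ℕ // ((∑ j, q j : ℕ) : ℤ) = Q} := by
  rcases lt_or_ge Q 0 with hQ | hQ
  · have : IsEmpty {q : Fin m → ℕ // ((∑ j, q j : ℕ) : ℤ) = Q} := ⟨fun q => by omega⟩
    rw [Pm, if_neg (by omega), Nat.card_of_isEmpty]
  · lift Q to ℕ using hQ
    simp only [Nat.cast_inj, natCard_tuple_sum_eq, Pm, Nat.cast_nonneg, if_true, Int.toNat_natCast,
      Nat.multichoose_eq]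
    rw [add_comm Q m]
    exact Nat.choose_symm_of_eq_add (by omega)

lemma Mpm_eq_natCard (p m : ℕ) (B : ℤ) :
    Mpm p m B = Nat.card {b : Fin m → Fin p // ∑ j, ((b j : ℕ) : ℤ) = B} := by
  rw [Mpm, Nat.card_eq_fintype_card, Fintype.card_subtype]

lemma natCard_digitSums_eq (p E : ℕ) [NeZero p] {m : ℕ} (hm : 0 < m) (Q : ℤ) (B : Fin E → ℤ) :
    Nat.card {a : Fin m → ℕ // ((∑ j, a j / p ^ E : ℕ) : ℤ) = Q ∧
      ∀ k : Fin E, ((∑ j, a j / p ^ (k : ℕ) % p : ℕ) : ℤ) = B k} =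
    Pm m Q * ∏ k, Mpm p m (B k) := by
  let e : {a : Fin m → ℕ // ((∑ j, a j / p ^ E : ℕ) : ℤ) = Q ∧
      ∀ k : Fin E, ((∑ j, a j / p ^ (k : ℕ) % p : ℕ) : ℤ) = B k} ≃
      {q : Fin m → ℕ // ((∑ j, q j : ℕ) : ℤ) = Q} ×
        ((k : Fin E) → {b : Fin m → Fin p // ∑ j, ((b j : ℕ) : ℤ) = B k}) :=
    ((tupleDivPowDigitsEquiv p E m).subtypeEquiv (fun a => by simp [tupleDivPowDigitsEquiv])).trans
      (Equiv.subtypeProdEquivProd.trans ((Equiv.refl _).prodCongr Equiv.subtypePiEquivPi))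
  rw [Nat.card_congr e, Nat.card_prod, Nat.card_pi, Pm_eq_natCard hm]
  simp only [Mpm_eq_natCard]

section DigitSums

variable {m : ℕ} (p : ℕ) (a : Fin m → ℕ)

lemma sum_mod_pow_succ (k : ℕ) :
    ∑ j, a j % p ^ (k + 1) = ∑ j, a j % p ^ k + p ^ k * ∑ j, a j / p ^ k % p := by
  simp only [Nat.mod_pow_succ, sum_add_distrib, mul_sum]

lemma sum_eq_pow_mul_sum_div_add_sum_mod (E : ℕ) :
    ∑ j, a j = p ^ E * ∑ j, a j / p ^ E + ∑ j, a j % p ^ E := by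
  rw [mul_sum, ← sum_add_distrib]
  exact sum_congr rfl fun j _ => (Nat.div_add_mod _ _).symm

lemma sum_mod_pow_le (hp : 0 < p) (i : ℕ) : ∑ j, a j % p ^ i ≤ m * (p ^ i - 1) := by
  calc ∑ j, a j % p ^ i ≤ ∑ _j : Fin m, (p ^ i - 1) :=
        sum_le_sum fun j _ => Nat.le_sub_one_of_lt (Nat.mod_lt _ (by positivity))
    _ = m * (p ^ i - 1) := by simp

lemma dvd_sum_mod_pow_add {r e i : ℕ} (hp : 0 < p) (hi : i ≤ e) (ha : ∑ j, a j = r * (p ^ e - 1)) :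
    p ^ i ∣ ∑ j, a j % p ^ i + r := by
  have hmod : (∑ j, a j % p ^ i) % p ^ i = (∑ j, a j) % p ^ i := (sum_nat_mod _ _ _).symm
  have hsum : ∑ j, a j + r = r * p ^ e := by
    rw [ha]; zify [Nat.one_le_pow e p hp]; ring
  rw [Nat.dvd_iff_mod_eq_zero, Nat.add_mod, hmod, ← Nat.add_mod, hsum]
  exact Nat.mod_eq_zero_of_dvd (Dvd.dvd.mul_left (pow_dvd_pow p hi) r)

lemma exists_carry {r e i : ℕ} (hp : 0 < p) (hi : i ≤ e) (ha : ∑ j, a j = r * (p ^ e - 1))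
    (h : r * (p ^ i - 1) + p ^ i ≤ ∑ j, a j % p ^ i) :
    ∃ t ∈ Icc 1 (m - r - 1),
      ((∑ j, a j % p ^ i : ℕ) : ℤ) = r * ((p : ℤ) ^ i - 1) + t * (p : ℤ) ^ i := by
  obtain ⟨u, hu⟩ := dvd_sum_mod_pow_add p a hp hi ha
  have hle := sum_mod_pow_le p a hp i
  have hP : 1 ≤ p ^ i := Nat.one_le_pow i p hp
  set s := ∑ j, a j % p ^ i
  zify [hP] at hu hle h
  have hur : r + 1 ≤ u := by
    by_contra!
    nlinarith
  have hum : u + 1 ≤ m := by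
    by_contra!
    nlinarith
  refine ⟨u - r, mem_Icc.mpr ⟨by omega, by omega⟩, ?_⟩
  push_cast [Nat.cast_sub (by omega : r ≤ u)]
  linear_combination hu

def HasCarries (r e : ℕ) (d : Fin (e - 1) → ℕ) : Prop :=
  ∑ j, a j = r * (p ^ e - 1) ∧
    ∀ i ≤ e - 1, ((∑ j, a j % p ^ i : ℕ) : ℤ) = r * ((p : ℤ) ^ i - 1) + dExt e d i * (p : ℤ) ^ i

end DigitSums

lemma dExt_zero (e : ℕ) (d : Fin (e - 1) → ℕ) : dExt e d 0 = 0 := by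
  simp [dExt]

lemma dExt_succ (e : ℕ) (d : Fin (e - 1) → ℕ) (k : ℕ) (hk : k < e - 1) :
    dExt e d (k + 1) = d ⟨k, hk⟩ := by
  simp [dExt, hk]

section Carries

variable {m : ℕ} (p : ℕ) (a : Fin m → ℕ) (r e : ℕ)

lemma cSeq_condition_iff_exists_hasCarries (hp : 0 < p) :
    (∑ j, a j = r * (p ^ e - 1) ∧
      ∀ i, 1 ≤ i → i ≤ e - 1 → r * (p ^ i - 1) + p ^ i ≤ ∑ j, a j % p ^ i) ↔
    ∃ d ∈ Fintype.piFinset (fun _ : Fin (e - 1) => Icc 1 (m - r - 1)), HasCarries p a r e d := by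
  constructor
  · rintro ⟨ha, h⟩
    choose t ht hs using fun k : Fin (e - 1) =>
      exists_carry p a hp (i := k + 1) (by omega) ha (h _ (by omega) (by omega))
    refine ⟨t, Fintype.mem_piFinset.mpr ht, ha, fun i hi => ?_⟩
    cases i with
    | zero => simp [dExt_zero]
    | succ k => rw [dExt_succ e t k hi]; exact hs ⟨k, hi⟩
  · rintro ⟨d, hd, ha, hs⟩
    refine ⟨ha, fun i hi1 hi2 => ?_⟩
    obtain ⟨k, rfl⟩ : ∃ k, i = k + 1 := ⟨i - 1, by omega⟩
    have hd1 : 1 ≤ d ⟨k, hi2⟩ := (mem_Icc.mp (Fintype.mem_piFinset.mp hd _)).1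
    have hsk := hs (k + 1) hi2
    rw [dExt_succ e d k hi2] at hsk
    suffices ((r * (p ^ (k + 1) - 1) + p ^ (k + 1) : ℕ) : ℤ) ≤ ((∑ j, a j % p ^ (k + 1) : ℕ) : ℤ) by
      exact_mod_cast this
    rw [hsk]
    push_cast [Nat.one_le_pow (k + 1) p hp]
    nlinarith [pow_pos (Int.natCast_pos.mpr hp) (k + 1)]

lemma HasCarries.unique (hp : 0 < p) {d d' : Fin (e - 1) → ℕ} (h : HasCarries p a r e d)
    (h' : HasCarries p a r e d') : d = d' := by
  funext k
  have hk := h.2 (k + 1) k.isLt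
  rw [h'.2 (k + 1) k.isLt, dExt_succ e d k k.isLt, dExt_succ e d' k k.isLt] at hk
  exact_mod_cast mul_right_cancel₀ (pow_ne_zero _ (by exact_mod_cast hp.ne')) (add_left_cancel hk).symm

lemma hasCarries_iff_digitSums (hp : 0 < p) (he : 1 ≤ e) (d : Fin (e - 1) → ℕ) :
    HasCarries p a r e d ↔
      ((∑ j, a j / p ^ (e - 1) : ℕ) : ℤ) = r * ((p : ℤ) - 1) - dExt e d (e - 1) ∧
      ∀ k : Fin (e - 1), ((∑ j, a j / p ^ (k : ℕ) % p : ℕ) : ℤ) =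
        r * ((p : ℤ) - 1) + dExt e d (k + 1) * p - dExt e d k := by
  have hp' : (p : ℤ) ≠ 0 := by exact_mod_cast hp.ne'
  have hpartial := forall_partialSum_eq_iff hp' r (s := fun i => ((∑ j, a j % p ^ i : ℕ) : ℤ))
    (B := fun k => ((∑ j, a j / p ^ k % p : ℕ) : ℤ)) (by simp) (dExt_zero e d)
    (fun k => by simp only [sum_mod_pow_succ]; push_cast; ring) (e - 1)
  have htotal (hs : ((∑ j, a j % p ^ (e - 1) : ℕ) : ℤ) =
      r * ((p : ℤ) ^ (e - 1) - 1) + dExt e d (e - 1) * (p : ℤ) ^ (e - 1)) :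
      ((∑ j, a j : ℕ) : ℤ) - r * ((p : ℤ) ^ e - 1) = (p : ℤ) ^ (e - 1) *
        (((∑ j, a j / p ^ (e - 1) : ℕ) : ℤ) - (r * ((p : ℤ) - 1) - dExt e d (e - 1))) := by
    have hpe : (p : ℤ) ^ e = (p : ℤ) ^ (e - 1) * p := by rw [← pow_succ]; congr 1; omega
    rw [sum_eq_pow_mul_sum_div_add_sum_mod p a (e - 1)]
    push_cast at hs ⊢
    rw [hs, hpe]
    ring
  have hN : ((r * (p ^ e - 1) : ℕ) : ℤ) = r * ((p : ℤ) ^ e - 1) := by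
    push_cast [Nat.one_le_pow e p hp]; ring
  constructor
  · rintro ⟨ha, hs⟩
    refine ⟨?_, fun k => hpartial.mpr hs k k.isLt⟩
    have h0 := htotal (hs _ le_rfl)
    rw [ha, hN, sub_self, eq_comm, mul_eq_zero, sub_eq_zero] at h0
    exact h0.resolve_left (pow_ne_zero _ hp')
  · rintro ⟨hQ, hB⟩
    have hs := hpartial.mp fun k hk => hB ⟨k, hk⟩
    refine ⟨?_, hs⟩
    have h0 := htotal (hs _ le_rfl)
    rw [hQ, sub_self, mul_zero, sub_eq_zero, ← hN] at h0
    exact_mod_cast h0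

instance (d : Fin (e - 1) → ℕ) : Finite {a : Fin m → ℕ // HasCarries p a r e d} :=
  .of_injective (fun a => (⟨a.1, a.2.1⟩ : {q : Fin m → ℕ // ∑ j, q j = r * (p ^ e - 1)}))
    fun _ _ h => Subtype.ext (Subtype.mk.inj h)

end Carries

theorem stmt_8_general (p r m e : ℕ) (hp : p.Prime) (he : 2 ≤ e) :
    cSeq p r m e =
      ∑ d ∈ Fintype.piFinset (fun _ : Fin (e - 1) => Finset.Icc 1 (m - r - 1)),
        Pm m ((r : ℤ) * (p - 1) - dExt e d (e - 1)) *
          ∏ i ∈ Finset.range (e - 1),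
            Mpm p m ((r : ℤ) * (p - 1) + dExt e d (i + 1) * p - dExt e d i) := by
  have : NeZero p := ⟨hp.ne_zero⟩
  calc cSeq p r m e = Nat.card {a : Fin m → ℕ //
        ∃ d ∈ Fintype.piFinset (fun _ : Fin (e - 1) => Icc 1 (m - r - 1)), HasCarries p a r e d} :=
        Nat.card_congr <| Equiv.subtypeEquivRight fun a =>
          cSeq_condition_iff_exists_hasCarries p a r e hp.pos
    _ = ∑ d ∈ Fintype.piFinset (fun _ : Fin (e - 1) => Icc 1 (m - r - 1)),
          Nat.card {a : Fin m → ℕ // HasCarries p a r e d} :=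
        Nat.card_exists_mem_eq_sum _ _ fun a _ _ h h' => h.unique p a r e hp.pos h'
    _ = _ := sum_congr rfl fun d hd => ?_
  have hm : 0 < m := by
    have := mem_Icc.mp (Fintype.mem_piFinset.mp hd ⟨0, by omega⟩)
    omega
  rw [Nat.card_congr <| Equiv.subtypeEquivRight fun a =>
      hasCarries_iff_digitSums p a r e hp.pos (by omega) d,
    natCard_digitSums_eq p (e - 1) hm, prod_range]

/-- the closed formula for `c_{p,r,m,e}` as a sum over carry-over
tuples `(d_{e−1},…,d_1)` with `1 ≤ d_i ≤ m−r−1` and `d_0 = 0`. -/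
theorem stmt_8 (p r m e : ℕ) (hp : p.Prime) (hr : 0 < r) (he : 2 ≤ e)
    (hm : r + 2 ≤ m) :
    cSeq p r m e =
      ∑ d ∈ Fintype.piFinset (fun _ : Fin (e - 1) => Finset.Icc 1 (m - r - 1)),
        Pm m ((r : ℤ) * (p - 1) - dExt e d (e - 1)) *
          ∏ i ∈ Finset.range (e - 1),
            Mpm p m ((r : ℤ) * (p - 1) + dExt e d (i + 1) * p - dExt e d i) :=
  stmt_8_general p r m e hp he
end

section
/- Let p be a prime and let r, m, e be positive integers with m ≥ r+2 and e ≥ 2. Then c_{p,r,m,e} = Y_0 · U^{e−2} · X_0, where the right-hand side is the 1×1 matrix product of the row vector Y_0, the (e−2)-nd power of the determining matrix U, and the column vector X_0. -/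
/-- The determining matrix `U(p,r,m)`, of size `(m−r−1)×(m−r−1)`, with entries
`u_{ij} = M_{p,m}(r(p−1)+ip−j)` for `1 ≤ i,j ≤ m−r−1`. -/
def Umat (p r m : ℕ) : Matrix (Fin (m - r - 1)) (Fin (m - r - 1)) ℕ :=
  fun i j => Mpm p m ((r : ℤ) * (p - 1) + ((i : ℕ) + 1) * p - ((j : ℕ) + 1))

/-- The column vector `X_0`, with entries `(X_0)_j = M_{p,m}(r(p−1)+jp)` for
`1 ≤ j ≤ m−r−1`. -/
def X0mat (p r m : ℕ) : Matrix (Fin (m - r - 1)) (Fin 1) ℕ :=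
  fun j _ => Mpm p m ((r : ℤ) * (p - 1) + ((j : ℕ) + 1) * p)

/-- The row vector `Y_0`, with entries `(Y_0)_n = P_m(r(p−1)−n)` for
`1 ≤ n ≤ m−r−1`. -/
def Y0mat (p r m : ℕ) : Matrix (Fin 1) (Fin (m - r - 1)) ℕ :=
  fun _ n => Pm m ((r : ℤ) * (p - 1) - ((n : ℕ) + 1))


section Helpers

lemma finite_of_bounded {m c : ℕ} {Q : (Fin m → ℕ) → Prop} (hQ : ∀ t, Q t → ∀ j, t j < c) :
    Finite {t : Fin m → ℕ // Q t} := by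
  have hinj : Function.Injective
      (fun x : {t : Fin m → ℕ // Q t} => fun j => (⟨x.1 j, hQ x.1 x.2 j⟩ : Fin c)) := by
    intro a b h
    ext j
    exact congrArg Fin.val (congrFun h j)
  exact Finite.of_injective _ hinj

lemma nat_card_sigma {ι : Type*} [Fintype ι] {α : ι → Type*} [∀ i, Finite (α i)] :
    Nat.card (Σ i, α i) = ∑ i, Nat.card (α i) := by
  classical
  letI : ∀ i, Fintype (α i) := fun i => Fintype.ofFinite _
  simp only [Nat.card_eq_fintype_card, Fintype.card_sigma]

lemma nat_card_partition {α : Type*} (P : α → Prop) (g : α → ℕ) (d : ℕ) [Finite {x // P x}]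
    (hg : ∀ x, P x → 1 ≤ g x ∧ g x ≤ d) :
    Nat.card {x // P x} = ∑ k : Fin d, Nat.card {x // P x ∧ g x = (k : ℕ) + 1} := by
  classical
  set F : {x // P x} → Fin d := fun y => ⟨g y.1 - 1, by have := hg y.1 y.2; omega⟩ with hF
  rw [← Nat.card_congr (Equiv.sigmaFiberEquiv F), nat_card_sigma]
  refine Finset.sum_congr rfl fun k _ => ?_
  refine Nat.card_congr ?_
  refine (Equiv.subtypeEquivRight (fun y => ?_)).trans
    ((Equiv.subtypeSubtypeEquivSubtypeInter P (fun a => g a = (k : ℕ) + 1)))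
  have h1 := hg y.1 y.2
  constructor
  · intro h; have := congrArg Fin.val h; simp [hF] at this; omega
  · intro h; apply Fin.ext; simp [hF]; omega

lemma key_id (p r k' i : ℕ) (hp : 1 ≤ p) :
    r * (p ^ (i + 1) - 1) + k' * p ^ (i + 1) = (r * (p - 1) + k' * p) * p ^ i + r * (p ^ i - 1) := by
  have h1 : 1 ≤ p ^ (i + 1) := Nat.one_le_pow _ _ hp
  have h2 : 1 ≤ p ^ i := Nat.one_le_pow _ _ hp
  zify [h1, h2, hp]
  ring

end Helpers


lemma card_digits (p m : ℕ) (S : ℤ) :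
    Nat.card {b : Fin m → ℕ // (∀ j, b j < p) ∧ (∑ j, ((b j : ℕ) : ℤ)) = S} = Mpm p m S := by
  classical
  have e : {b : Fin m → ℕ // (∀ j, b j < p) ∧ (∑ j, ((b j : ℕ) : ℤ)) = S} ≃
      {b : Fin m → Fin p // (∑ j, ((b j : ℕ) : ℤ)) = S} :=
    { toFun := fun x => ⟨fun j => ⟨x.1 j, x.2.1 j⟩, x.2.2⟩
      invFun := fun x => ⟨fun j => (x.1 j : ℕ), fun j => (x.1 j).2, x.2⟩
      left_inv := fun x => rfl
      right_inv := fun x => rfl }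
  rw [Nat.card_congr e, Nat.card_eq_fintype_card, Mpm, Fintype.card_subtype]

lemma card_digits' (p m A K : ℕ) :
    Nat.card {b : Fin m → ℕ // (∀ j, b j < p) ∧ (∑ j, b j) + K = A} = Mpm p m ((A : ℤ) - K) := by
  rw [← card_digits p m ((A : ℤ) - K)]
  refine Nat.card_congr (Equiv.subtypeEquivRight fun b => ?_).symm
  refine and_congr_right fun _ => ?_
  rw [← Nat.cast_sum]
  omega

noncomputable def Ncount (p r m i k : ℕ) : ℕ :=
  Nat.card {t : Fin m → ℕ // (∀ j, t j < p ^ i) ∧ (∑ j, t j) = r * (p ^ i - 1) + k * p ^ i ∧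
    ∀ l, 1 ≤ l → l < i → r * (p ^ l - 1) + p ^ l ≤ ∑ j, t j % p ^ l}

lemma Ncount_step (p r m i k' : ℕ) (hp : 2 ≤ p) (hm : r + 2 ≤ m) (hi : 1 ≤ i) :
    Ncount p r m (i + 1) k' =
      ∑ k : Fin (m - r - 1),
        Mpm p m ((r : ℤ) * ((p : ℤ) - 1) + (k' : ℤ) * p - ((k : ℕ) + 1)) *
          Ncount p r m i ((k : ℕ) + 1) := by
  classical
  have hp1 : 1 ≤ p := by omega
  have hPi : 0 < p ^ i := Nat.one_le_pow _ _ (by omega)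
  obtain ⟨A, hA⟩ : ∃ A, A = r * (p - 1) + k' * p := ⟨_, rfl⟩
  obtain ⟨d, hd⟩ : ∃ d, d = m - r - 1 := ⟨_, rfl⟩
  set g : (Fin m → ℕ) → ℕ := fun t => ((∑ j, t j % p ^ i) - r * (p ^ i - 1)) / p ^ i with hgdef
  have hkey : r * (p ^ (i + 1) - 1) + k' * p ^ (i + 1) = A * p ^ i + r * (p ^ i - 1) := by
    rw [hA]; exact key_id p r k' i hp1
  have hdecomp : ∀ t : Fin m → ℕ,
      (∑ j, t j % p ^ i) + p ^ i * (∑ j, t j / p ^ i) = ∑ j, t j := by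
    intro t
    rw [Finset.mul_sum, ← Finset.sum_add_distrib]
    exact Finset.sum_congr rfl fun j _ => Nat.mod_add_div _ _
  have hsum_ub : ∀ t : Fin m → ℕ, (∑ j, t j % p ^ i) ≤ m * (p ^ i - 1) := by
    intro t
    calc (∑ j, t j % p ^ i) ≤ ∑ _j : Fin m, (p ^ i - 1) := Finset.sum_le_sum fun j _ => by
            have := Nat.mod_lt (t j) hPi; omega
      _ = m * (p ^ i - 1) := by simp [Finset.sum_const, mul_comm]
  have main : ∀ t : Fin m → ℕ,
      (∑ j, t j) = r * (p ^ (i + 1) - 1) + k' * p ^ (i + 1) →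
      (∀ l, 1 ≤ l → l < i + 1 → r * (p ^ l - 1) + p ^ l ≤ ∑ j, t j % p ^ l) →
      (∑ j, t j % p ^ i) = r * (p ^ i - 1) + g t * p ^ i ∧ 1 ≤ g t ∧ g t ≤ d := by
    intro t hs hc
    have hdec := hdecomp t
    have hsub := hsum_ub t
    have hslb : r * (p ^ i - 1) + p ^ i ≤ ∑ j, t j % p ^ i := hc i hi (by omega)
    obtain ⟨s, hsdef⟩ : ∃ s, s = ∑ j, t j % p ^ i := ⟨_, rfl⟩
    obtain ⟨D, hDdef⟩ : ∃ D, D = ∑ j, t j / p ^ i := ⟨_, rfl⟩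
    rw [← hsdef, ← hDdef] at hdec
    rw [← hsdef] at hslb hsub
    have hDA : D + 1 ≤ A := by
      by_contra hcon
      push_neg at hcon
      have h1 : p ^ i * A ≤ p ^ i * D := Nat.mul_le_mul_left _ (by omega)
      have h2 : A * p ^ i = p ^ i * A := mul_comm _ _
      omega
    have hKmul : (A - D) * p ^ i = A * p ^ i - D * p ^ i := Nat.sub_mul _ _ _
    have hDP : D * p ^ i = p ^ i * D := mul_comm _ _
    have hseq : s = r * (p ^ i - 1) + (A - D) * p ^ i := by omega
    have hKub : A - D ≤ d := by
      by_contra hcon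
      push_neg at hcon
      have h5 : m - r ≤ A - D := by omega
      have h6 : (m - r) * p ^ i ≤ (A - D) * p ^ i := Nat.mul_le_mul_right _ h5
      have h7 : (m - r) * (p ^ i - 1) = m * (p ^ i - 1) - r * (p ^ i - 1) := Nat.sub_mul _ _ _
      have h9 : p ^ i - 1 + 1 = p ^ i := by omega
      have h8 : (m - r) * p ^ i = (m - r) * (p ^ i - 1) + (m - r) := by
        calc (m - r) * p ^ i = (m - r) * ((p ^ i - 1) + 1) := by rw [h9]
          _ = (m - r) * (p ^ i - 1) + (m - r) := Nat.mul_succ _ _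
      have h10 : r * (p ^ i - 1) ≤ m * (p ^ i - 1) := Nat.mul_le_mul_right _ (by omega)
      omega
    have hgt : g t = A - D := by
      have h11 : s - r * (p ^ i - 1) = (A - D) * p ^ i := by omega
      rw [hgdef]
      show ((∑ j, t j % p ^ i) - r * (p ^ i - 1)) / p ^ i = A - D
      rw [← hsdef, h11, Nat.mul_div_cancel _ hPi]
    refine ⟨?_, ?_, ?_⟩
    · rw [← hsdef, hgt]; exact hseq
    · omega
    · omega
  haveI hfin : Finite {t : Fin m → ℕ //
      (∀ j, t j < p ^ (i + 1)) ∧ (∑ j, t j) = r * (p ^ (i + 1) - 1) + k' * p ^ (i + 1) ∧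
      ∀ l, 1 ≤ l → l < i + 1 → r * (p ^ l - 1) + p ^ l ≤ ∑ j, t j % p ^ l} :=
    finite_of_bounded (fun t ht => ht.1)
  have hN : Ncount p r m (i + 1) k' = Nat.card {t : Fin m → ℕ //
      (∀ j, t j < p ^ (i + 1)) ∧ (∑ j, t j) = r * (p ^ (i + 1) - 1) + k' * p ^ (i + 1) ∧
      ∀ l, 1 ≤ l → l < i + 1 → r * (p ^ l - 1) + p ^ l ≤ ∑ j, t j % p ^ l} := rfl
  have hpart := nat_card_partition (fun t : Fin m → ℕ =>
      (∀ j, t j < p ^ (i + 1)) ∧ (∑ j, t j) = r * (p ^ (i + 1) - 1) + k' * p ^ (i + 1) ∧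
      ∀ l, 1 ≤ l → l < i + 1 → r * (p ^ l - 1) + p ^ l ≤ ∑ j, t j % p ^ l) g d
      (fun t ht => (main t ht.2.1 ht.2.2).2)
  rw [hN, hpart, hd]
  clear hpart hN hfin
  refine Finset.sum_congr rfl fun k _ => ?_
  have hMpm : Mpm p m ((r : ℤ) * ((p : ℤ) - 1) + (k' : ℤ) * p - ((k : ℕ) + 1)) =
      Nat.card {b : Fin m → ℕ // (∀ j, b j < p) ∧ (∑ j, b j) + ((k : ℕ) + 1) = A} := by
    rw [card_digits' p m A ((k : ℕ) + 1)]
    congr 1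
    rw [hA]
    push_cast [Nat.cast_sub hp1]
    ring
  have hNc : Ncount p r m i ((k : ℕ) + 1) =
      Nat.card {t : Fin m → ℕ // (∀ j, t j < p ^ i) ∧
        (∑ j, t j) = r * (p ^ i - 1) + ((k : ℕ) + 1) * p ^ i ∧
        ∀ l, 1 ≤ l → l < i → r * (p ^ l - 1) + p ^ l ≤ ∑ j, t j % p ^ l} := rfl
  rw [hMpm, hNc, ← Nat.card_prod]
  apply Nat.card_congr
  have F1 : ∀ t : Fin m → ℕ, (∀ j, t j < p ^ (i + 1)) →
      (∑ j, t j) = r * (p ^ (i + 1) - 1) + k' * p ^ (i + 1) →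
      (∀ l, 1 ≤ l → l < i + 1 → r * (p ^ l - 1) + p ^ l ≤ ∑ j, t j % p ^ l) →
      g t = (k : ℕ) + 1 →
      (∀ j, t j / p ^ i < p) ∧ (∑ j, t j / p ^ i) + ((k : ℕ) + 1) = A := by
    clear hMpm hNc
    intro t hb hs hc hgt
    have h0 := (main t hs hc).1
    rw [hgt] at h0
    constructor
    · intro j
      have h1 := hb j
      have h5 : p ^ (i + 1) = p ^ i * p := pow_succ p i
      have h6 : p * p ^ i = p ^ i * p := mul_comm _ _
      rw [Nat.div_lt_iff_lt_mul hPi]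
      omega
    · have hdec := hdecomp t
      obtain ⟨D, hDdef⟩ : ∃ D, D = ∑ j, t j / p ^ i := ⟨_, rfl⟩
      rw [← hDdef] at hdec ⊢
      have e1 : p ^ i * (D + ((k : ℕ) + 1)) = p ^ i * D + ((k : ℕ) + 1) * p ^ i := by ring
      have e2 : p ^ i * A = A * p ^ i := mul_comm _ _
      refine Nat.eq_of_mul_eq_mul_left hPi ?_
      omega
  have F2 : ∀ t : Fin m → ℕ, (∀ j, t j < p ^ (i + 1)) →
      (∑ j, t j) = r * (p ^ (i + 1) - 1) + k' * p ^ (i + 1) →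
      (∀ l, 1 ≤ l → l < i + 1 → r * (p ^ l - 1) + p ^ l ≤ ∑ j, t j % p ^ l) →
      g t = (k : ℕ) + 1 →
      (∀ j, t j % p ^ i < p ^ i) ∧
        (∑ j, t j % p ^ i) = r * (p ^ i - 1) + ((k : ℕ) + 1) * p ^ i ∧
        ∀ l, 1 ≤ l → l < i → r * (p ^ l - 1) + p ^ l ≤ ∑ j, t j % p ^ i % p ^ l := by
    clear hMpm hNc
    intro t hb hs hc hgt
    have h0 := (main t hs hc).1
    rw [hgt] at h0
    refine ⟨fun j => Nat.mod_lt _ hPi, h0, ?_⟩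
    intro l hl hl'
    have hdvd : p ^ l ∣ p ^ i := pow_dvd_pow p (le_of_lt hl')
    have hsum : ∑ j, t j % p ^ i % p ^ l = ∑ j, t j % p ^ l :=
      Finset.sum_congr rfl fun j _ => Nat.mod_mod_of_dvd _ hdvd
    rw [hsum]
    exact hc l hl (by omega)
  have G : ∀ b t : Fin m → ℕ, (∀ j, b j < p) → ((∑ j, b j) + ((k : ℕ) + 1) = A) →
      (∀ j, t j < p ^ i) → ((∑ j, t j) = r * (p ^ i - 1) + ((k : ℕ) + 1) * p ^ i) →
      (∀ l, 1 ≤ l → l < i → r * (p ^ l - 1) + p ^ l ≤ ∑ j, t j % p ^ l) →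
      ((∀ j, t j + p ^ i * b j < p ^ (i + 1)) ∧
        (∑ j, (t j + p ^ i * b j)) = r * (p ^ (i + 1) - 1) + k' * p ^ (i + 1) ∧
        (∀ l, 1 ≤ l → l < i + 1 →
          r * (p ^ l - 1) + p ^ l ≤ ∑ j, (t j + p ^ i * b j) % p ^ l)) ∧
      g (fun j => t j + p ^ i * b j) = (k : ℕ) + 1 := by
    clear hMpm hNc
    intro b t hbp hbsum htp htsum htc
    have hmodi : ∀ j, (t j + p ^ i * b j) % p ^ i = t j := fun j => by
      rw [Nat.add_mul_mod_self_left, Nat.mod_eq_of_lt (htp j)]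
    have hsum_mod : (∑ j, (t j + p ^ i * b j) % p ^ i)
        = r * (p ^ i - 1) + ((k : ℕ) + 1) * p ^ i := by
      rw [Finset.sum_congr rfl fun j _ => hmodi j, htsum]
    refine ⟨⟨?_, ?_, ?_⟩, ?_⟩
    · intro j
      have h1 := htp j
      have h2 := hbp j
      have h3 : p ^ i * b j ≤ p ^ i * (p - 1) := Nat.mul_le_mul_left _ (by omega)
      have h4 : p ^ i * (p - 1) + p ^ i = p ^ i * p := by
        rw [← Nat.mul_succ]
        congr 1
        omega
      have h5 : p ^ (i + 1) = p ^ i * p := pow_succ p i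
      omega
    · rw [Finset.sum_add_distrib, ← Finset.mul_sum, hkey]
      obtain ⟨Sb, hSb⟩ : ∃ Sb, Sb = ∑ j, b j := ⟨_, rfl⟩
      rw [← hSb] at hbsum ⊢
      have e1 : p ^ i * Sb + p ^ i * ((k : ℕ) + 1) = p ^ i * A := by
        rw [← Nat.mul_add, hbsum]
      have e2 : p ^ i * A = A * p ^ i := mul_comm _ _
      have e3 : ((k : ℕ) + 1) * p ^ i = p ^ i * ((k : ℕ) + 1) := mul_comm _ _
      omega
    · intro l hl hl'
      have hle : l ≤ i := by omega
      have hmod : ∀ j, (t j + p ^ i * b j) % p ^ l = t j % p ^ l := by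
        intro j
        have hsplit : p ^ i = p ^ l * p ^ (i - l) := by rw [← pow_add]; congr 1; omega
        rw [hsplit, mul_assoc, Nat.add_mul_mod_self_left]
      rw [Finset.sum_congr rfl fun j _ => hmod j]
      rcases Nat.lt_or_ge l i with h | h
      · exact htc l hl h
      · have hli : l = i := by omega
        subst hli
        have hmm : ∀ j, t j % p ^ l = t j := fun j => Nat.mod_eq_of_lt (htp j)
        rw [Finset.sum_congr rfl fun j _ => hmm j, htsum]
        have h6 : p ^ l ≤ ((k : ℕ) + 1) * p ^ l := Nat.le_mul_of_pos_left _ (by omega)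
        omega
    · rw [hgdef]
      show ((∑ j, (t j + p ^ i * b j) % p ^ i) - r * (p ^ i - 1)) / p ^ i = (k : ℕ) + 1
      rw [hsum_mod, Nat.add_sub_cancel_left, Nat.mul_div_cancel _ hPi]
  exact
    { toFun := fun x =>
        (⟨fun j => x.1 j / p ^ i, F1 x.1 x.2.1.1 x.2.1.2.1 x.2.1.2.2 x.2.2⟩,
         ⟨fun j => x.1 j % p ^ i, F2 x.1 x.2.1.1 x.2.1.2.1 x.2.1.2.2 x.2.2⟩)
      invFun := fun y => ⟨fun j => y.2.1 j + p ^ i * y.1.1 j,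
        G y.1.1 y.2.1 y.1.2.1 y.1.2.2 y.2.2.1 y.2.2.2.1 y.2.2.2.2⟩
      left_inv := fun x => Subtype.ext (funext fun j => Nat.mod_add_div (x.1 j) (p ^ i))
      right_inv := fun y => by
        obtain ⟨⟨b, hbp, hbsum⟩, ⟨t, htp, htsum, htc⟩⟩ := y
        refine Prod.ext ?_ ?_
        · apply Subtype.ext
          funext j
          show (t j + p ^ i * b j) / p ^ i = b j
          rw [Nat.add_mul_div_left _ _ hPi, Nat.div_eq_of_lt (htp j), zero_add]
        · apply Subtype.ext
          funext j
          show (t j + p ^ i * b j) % p ^ i = t j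
          rw [Nat.add_mul_mod_self_left, Nat.mod_eq_of_lt (htp j)] }



lemma card_comps (m : ℕ) (hm : 1 ≤ m) (N K : ℕ) :
    Nat.card {c : Fin m → ℕ // (∑ j, c j) + K = N} = Pm m ((N : ℤ) - K) := by
  classical
  by_cases h : K ≤ N
  · have e : {c : Fin m → ℕ // (∑ j, c j) + K = N} ≃ {c : Fin m → ℕ // ∑ j, c j = N - K} :=
      Equiv.subtypeEquivRight fun c => by omega
    rw [Nat.card_congr e, Nat.card_congr (Sym.equivNatSumOfFintype (Fin m) (N - K)).symm,
      Nat.card_eq_fintype_card, Sym.card_sym_eq_multichoose, Nat.multichoose_eq,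
      Fintype.card_fin, Pm, if_pos (by omega)]
    have h1 : ((N : ℤ) - K).toNat = N - K := by omega
    rw [h1]
    set n := N - K with hn
    have h2 : n ≤ n + m - 1 := by omega
    have h3 := Nat.choose_symm h2
    have h4 : n + m - 1 - n = m - 1 := by omega
    rw [h4] at h3
    rw [h3, Nat.add_comm m n]
  · have : IsEmpty {c : Fin m → ℕ // (∑ j, c j) + K = N} := ⟨fun c => by have := c.2; omega⟩
    rw [Nat.card_of_isEmpty, Pm, if_neg (by omega)]


lemma Ncount_one (p r m k : ℕ) (hp : 1 ≤ p) :
    Ncount p r m 1 k = Mpm p m ((r : ℤ) * ((p : ℤ) - 1) + (k : ℤ) * p) := by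
  have hcast : (r : ℤ) * ((p : ℤ) - 1) + (k : ℤ) * p = ((r * (p - 1) + k * p : ℕ) : ℤ) - (0 : ℕ) := by
    push_cast [Nat.cast_sub hp]
    ring
  rw [Ncount, hcast, ← card_digits' p m (r * (p - 1) + k * p) 0]
  apply Nat.card_congr (Equiv.subtypeEquivRight _)
  intro t
  constructor
  · rintro ⟨h1, h2, _⟩
    exact ⟨by simpa [pow_one] using h1, by simpa [pow_one] using h2⟩
  · rintro ⟨h1, h2⟩
    exact ⟨by simpa [pow_one] using h1, by simpa [pow_one] using h2, fun l hl hl' => by omega⟩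



lemma cSeq_top (p r m E : ℕ) (hp : 2 ≤ p) (hm : r + 2 ≤ m) :
    cSeq p r m (E + 2) = ∑ k : Fin (m - r - 1),
      Pm m ((r : ℤ) * ((p : ℤ) - 1) - ((k : ℕ) + 1)) * Ncount p r m (E + 1) ((k : ℕ) + 1) := by
  classical
  have hp1 : 1 ≤ p := by omega
  have hPi : 0 < p ^ (E + 1) := Nat.one_le_pow _ _ (by omega)
  obtain ⟨A, hA⟩ : ∃ A, A = r * (p - 1) := ⟨_, rfl⟩
  obtain ⟨d, hd⟩ : ∃ d, d = m - r - 1 := ⟨_, rfl⟩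
  set g : (Fin m → ℕ) → ℕ :=
    fun t => ((∑ j, t j % p ^ (E + 1)) - r * (p ^ (E + 1) - 1)) / p ^ (E + 1) with hgdef
  have hkey : r * (p ^ (E + 2) - 1) = A * p ^ (E + 1) + r * (p ^ (E + 1) - 1) := by
    have := key_id p r 0 E.succ hp1
    simp only [Nat.zero_mul, Nat.add_zero, Nat.zero_add] at this
    rw [hA]
    convert this using 2 <;> omega
  have hdecomp : ∀ t : Fin m → ℕ,
      (∑ j, t j % p ^ (E + 1)) + p ^ (E + 1) * (∑ j, t j / p ^ (E + 1)) = ∑ j, t j := by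
    intro t
    rw [Finset.mul_sum, ← Finset.sum_add_distrib]
    exact Finset.sum_congr rfl fun j _ => Nat.mod_add_div _ _
  have hsum_ub : ∀ t : Fin m → ℕ, (∑ j, t j % p ^ (E + 1)) ≤ m * (p ^ (E + 1) - 1) := by
    intro t
    calc (∑ j, t j % p ^ (E + 1)) ≤ ∑ _j : Fin m, (p ^ (E + 1) - 1) :=
          Finset.sum_le_sum fun j _ => by have := Nat.mod_lt (t j) hPi; omega
      _ = m * (p ^ (E + 1) - 1) := by simp [Finset.sum_const, mul_comm]
  have main : ∀ t : Fin m → ℕ,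
      (∑ j, t j) = r * (p ^ (E + 2) - 1) →
      (∀ l, 1 ≤ l → l ≤ E + 1 → r * (p ^ l - 1) + p ^ l ≤ ∑ j, t j % p ^ l) →
      (∑ j, t j % p ^ (E + 1)) = r * (p ^ (E + 1) - 1) + g t * p ^ (E + 1) ∧
        1 ≤ g t ∧ g t ≤ d := by
    intro t hs hc
    have hdec := hdecomp t
    have hsub := hsum_ub t
    have hslb : r * (p ^ (E + 1) - 1) + p ^ (E + 1) ≤ ∑ j, t j % p ^ (E + 1) :=
      hc (E + 1) (by omega) (by omega)
    obtain ⟨s, hsdef⟩ : ∃ s, s = ∑ j, t j % p ^ (E + 1) := ⟨_, rfl⟩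
    obtain ⟨D, hDdef⟩ : ∃ D, D = ∑ j, t j / p ^ (E + 1) := ⟨_, rfl⟩
    rw [← hsdef, ← hDdef] at hdec
    rw [← hsdef] at hslb hsub
    have hDA : D + 1 ≤ A := by
      by_contra hcon
      push_neg at hcon
      have h1 : p ^ (E + 1) * A ≤ p ^ (E + 1) * D := Nat.mul_le_mul_left _ (by omega)
      have h2 : A * p ^ (E + 1) = p ^ (E + 1) * A := mul_comm _ _
      omega
    have hKmul : (A - D) * p ^ (E + 1) = A * p ^ (E + 1) - D * p ^ (E + 1) := Nat.sub_mul _ _ _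
    have hDP : D * p ^ (E + 1) = p ^ (E + 1) * D := mul_comm _ _
    have hseq : s = r * (p ^ (E + 1) - 1) + (A - D) * p ^ (E + 1) := by omega
    have hKub : A - D ≤ d := by
      by_contra hcon
      push_neg at hcon
      have h5 : m - r ≤ A - D := by omega
      have h6 : (m - r) * p ^ (E + 1) ≤ (A - D) * p ^ (E + 1) := Nat.mul_le_mul_right _ h5
      have h7 : (m - r) * (p ^ (E + 1) - 1) = m * (p ^ (E + 1) - 1) - r * (p ^ (E + 1) - 1) :=
        Nat.sub_mul _ _ _
      have h9 : p ^ (E + 1) - 1 + 1 = p ^ (E + 1) := by omega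
      have h8 : (m - r) * p ^ (E + 1) = (m - r) * (p ^ (E + 1) - 1) + (m - r) := by
        calc (m - r) * p ^ (E + 1) = (m - r) * ((p ^ (E + 1) - 1) + 1) := by rw [h9]
          _ = (m - r) * (p ^ (E + 1) - 1) + (m - r) := Nat.mul_succ _ _
      have h10 : r * (p ^ (E + 1) - 1) ≤ m * (p ^ (E + 1) - 1) :=
        Nat.mul_le_mul_right _ (by omega)
      omega
    have hgt : g t = A - D := by
      have h11 : s - r * (p ^ (E + 1) - 1) = (A - D) * p ^ (E + 1) := by omega
      rw [hgdef]
      show ((∑ j, t j % p ^ (E + 1)) - r * (p ^ (E + 1) - 1)) / p ^ (E + 1) = A - D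
      rw [← hsdef, h11, Nat.mul_div_cancel _ hPi]
    refine ⟨?_, ?_, ?_⟩
    · rw [← hsdef, hgt]; exact hseq
    · omega
    · omega
  haveI hfin : Finite {a : Fin m → ℕ //
      (∑ j, a j) = r * (p ^ (E + 2) - 1) ∧
      ∀ l, 1 ≤ l → l ≤ E + 1 → r * (p ^ l - 1) + p ^ l ≤ ∑ j, a j % p ^ l} := by
    refine finite_of_bounded (c := r * (p ^ (E + 2) - 1) + 1) (fun t ht => fun j => ?_)
    have h1 : t j ≤ ∑ j', t j' :=
      Finset.single_le_sum (fun i _ => Nat.zero_le (t i)) (Finset.mem_univ j)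
    omega
  have hN : cSeq p r m (E + 2) = Nat.card {a : Fin m → ℕ //
      (∑ j, a j) = r * (p ^ (E + 2) - 1) ∧
      ∀ l, 1 ≤ l → l ≤ E + 1 → r * (p ^ l - 1) + p ^ l ≤ ∑ j, a j % p ^ l} := rfl
  have hpart := nat_card_partition (fun a : Fin m → ℕ =>
      (∑ j, a j) = r * (p ^ (E + 2) - 1) ∧
      ∀ l, 1 ≤ l → l ≤ E + 1 → r * (p ^ l - 1) + p ^ l ≤ ∑ j, a j % p ^ l) g d
      (fun t ht => (main t ht.1 ht.2).2)
  rw [hN, hpart, hd]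
  clear hpart hN hfin
  refine Finset.sum_congr rfl fun k _ => ?_
  have hPm : Pm m ((r : ℤ) * ((p : ℤ) - 1) - ((k : ℕ) + 1)) =
      Nat.card {c : Fin m → ℕ // (∑ j, c j) + ((k : ℕ) + 1) = A} := by
    rw [card_comps m (by omega) A ((k : ℕ) + 1)]
    congr 1
    rw [hA]
    push_cast [Nat.cast_sub hp1]
    ring
  have hNc : Ncount p r m (E + 1) ((k : ℕ) + 1) =
      Nat.card {t : Fin m → ℕ // (∀ j, t j < p ^ (E + 1)) ∧
        (∑ j, t j) = r * (p ^ (E + 1) - 1) + ((k : ℕ) + 1) * p ^ (E + 1) ∧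
        ∀ l, 1 ≤ l → l < E + 1 → r * (p ^ l - 1) + p ^ l ≤ ∑ j, t j % p ^ l} := rfl
  rw [hPm, hNc, ← Nat.card_prod]
  apply Nat.card_congr
  have F1 : ∀ t : Fin m → ℕ,
      (∑ j, t j) = r * (p ^ (E + 2) - 1) →
      (∀ l, 1 ≤ l → l ≤ E + 1 → r * (p ^ l - 1) + p ^ l ≤ ∑ j, t j % p ^ l) →
      g t = (k : ℕ) + 1 →
      (∑ j, t j / p ^ (E + 1)) + ((k : ℕ) + 1) = A := by
    clear hPm hNc
    intro t hs hc hgt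
    have h0 := (main t hs hc).1
    rw [hgt] at h0
    have hdec := hdecomp t
    obtain ⟨D, hDdef⟩ : ∃ D, D = ∑ j, t j / p ^ (E + 1) := ⟨_, rfl⟩
    rw [← hDdef] at hdec ⊢
    have e1 : p ^ (E + 1) * (D + ((k : ℕ) + 1)) =
        p ^ (E + 1) * D + ((k : ℕ) + 1) * p ^ (E + 1) := by ring
    have e2 : p ^ (E + 1) * A = A * p ^ (E + 1) := mul_comm _ _
    refine Nat.eq_of_mul_eq_mul_left hPi ?_
    omega
  have F2 : ∀ t : Fin m → ℕ,
      (∑ j, t j) = r * (p ^ (E + 2) - 1) →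
      (∀ l, 1 ≤ l → l ≤ E + 1 → r * (p ^ l - 1) + p ^ l ≤ ∑ j, t j % p ^ l) →
      g t = (k : ℕ) + 1 →
      (∀ j, t j % p ^ (E + 1) < p ^ (E + 1)) ∧
        (∑ j, t j % p ^ (E + 1)) = r * (p ^ (E + 1) - 1) + ((k : ℕ) + 1) * p ^ (E + 1) ∧
        ∀ l, 1 ≤ l → l < E + 1 →
          r * (p ^ l - 1) + p ^ l ≤ ∑ j, t j % p ^ (E + 1) % p ^ l := by
    clear hPm hNc
    intro t hs hc hgt
    have h0 := (main t hs hc).1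
    rw [hgt] at h0
    refine ⟨fun j => Nat.mod_lt _ hPi, h0, ?_⟩
    intro l hl hl'
    have hdvd : p ^ l ∣ p ^ (E + 1) := pow_dvd_pow p (by omega)
    have hsum : ∑ j, t j % p ^ (E + 1) % p ^ l = ∑ j, t j % p ^ l :=
      Finset.sum_congr rfl fun j _ => Nat.mod_mod_of_dvd _ hdvd
    rw [hsum]
    exact hc l hl (by omega)
  have G : ∀ c t : Fin m → ℕ, ((∑ j, c j) + ((k : ℕ) + 1) = A) →
      (∀ j, t j < p ^ (E + 1)) →
      ((∑ j, t j) = r * (p ^ (E + 1) - 1) + ((k : ℕ) + 1) * p ^ (E + 1)) →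
      (∀ l, 1 ≤ l → l < E + 1 → r * (p ^ l - 1) + p ^ l ≤ ∑ j, t j % p ^ l) →
      ((∑ j, (t j + p ^ (E + 1) * c j)) = r * (p ^ (E + 2) - 1) ∧
        (∀ l, 1 ≤ l → l ≤ E + 1 →
          r * (p ^ l - 1) + p ^ l ≤ ∑ j, (t j + p ^ (E + 1) * c j) % p ^ l)) ∧
      g (fun j => t j + p ^ (E + 1) * c j) = (k : ℕ) + 1 := by
    clear hPm hNc
    intro c t hcsum htp htsum htc
    have hmodi : ∀ j, (t j + p ^ (E + 1) * c j) % p ^ (E + 1) = t j := fun j => by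
      rw [Nat.add_mul_mod_self_left, Nat.mod_eq_of_lt (htp j)]
    have hsum_mod : (∑ j, (t j + p ^ (E + 1) * c j) % p ^ (E + 1))
        = r * (p ^ (E + 1) - 1) + ((k : ℕ) + 1) * p ^ (E + 1) := by
      rw [Finset.sum_congr rfl fun j _ => hmodi j, htsum]
    refine ⟨⟨?_, ?_⟩, ?_⟩
    · rw [Finset.sum_add_distrib, ← Finset.mul_sum, hkey]
      obtain ⟨Sc, hSc⟩ : ∃ Sc, Sc = ∑ j, c j := ⟨_, rfl⟩
      rw [← hSc] at hcsum ⊢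
      have e1 : p ^ (E + 1) * Sc + p ^ (E + 1) * ((k : ℕ) + 1) = p ^ (E + 1) * A := by
        rw [← Nat.mul_add, hcsum]
      have e2 : p ^ (E + 1) * A = A * p ^ (E + 1) := mul_comm _ _
      have e3 : ((k : ℕ) + 1) * p ^ (E + 1) = p ^ (E + 1) * ((k : ℕ) + 1) := mul_comm _ _
      omega
    · intro l hl hl'
      have hmod : ∀ j, (t j + p ^ (E + 1) * c j) % p ^ l = t j % p ^ l := by
        intro j
        have hsplit : p ^ (E + 1) = p ^ l * p ^ (E + 1 - l) := by
          rw [← pow_add]; congr 1; omega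
        rw [hsplit, mul_assoc, Nat.add_mul_mod_self_left]
      rw [Finset.sum_congr rfl fun j _ => hmod j]
      rcases Nat.lt_or_ge l (E + 1) with h | h
      · exact htc l hl h
      · have hli : l = E + 1 := by omega
        rw [hli]
        have hmm : ∀ j, t j % p ^ (E + 1) = t j := fun j => Nat.mod_eq_of_lt (htp j)
        rw [Finset.sum_congr rfl fun j _ => hmm j, htsum]
        have h6 : p ^ (E + 1) ≤ ((k : ℕ) + 1) * p ^ (E + 1) :=
          Nat.le_mul_of_pos_left _ (by omega)
        omega
    · rw [hgdef]
      show ((∑ j, (t j + p ^ (E + 1) * c j) % p ^ (E + 1)) - r * (p ^ (E + 1) - 1)) /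
          p ^ (E + 1) = (k : ℕ) + 1
      rw [hsum_mod, Nat.add_sub_cancel_left, Nat.mul_div_cancel _ hPi]
  exact
    { toFun := fun x =>
        (⟨fun j => x.1 j / p ^ (E + 1), F1 x.1 x.2.1.1 x.2.1.2 x.2.2⟩,
         ⟨fun j => x.1 j % p ^ (E + 1), F2 x.1 x.2.1.1 x.2.1.2 x.2.2⟩)
      invFun := fun y => ⟨fun j => y.2.1 j + p ^ (E + 1) * y.1.1 j,
        G y.1.1 y.2.1 y.1.2 y.2.2.1 y.2.2.2.1 y.2.2.2.2⟩
      left_inv := fun x => Subtype.ext (funext fun j => Nat.mod_add_div (x.1 j) (p ^ (E + 1)))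
      right_inv := fun y => by
        obtain ⟨⟨c, hcsum⟩, ⟨t, htp, htsum, htc⟩⟩ := y
        refine Prod.ext ?_ ?_
        · apply Subtype.ext
          funext j
          show (t j + p ^ (E + 1) * c j) / p ^ (E + 1) = c j
          rw [Nat.add_mul_div_left _ _ hPi, Nat.div_eq_of_lt (htp j), zero_add]
        · apply Subtype.ext
          funext j
          show (t j + p ^ (E + 1) * c j) % p ^ (E + 1) = t j
          rw [Nat.add_mul_mod_self_left, Nat.mod_eq_of_lt (htp j)] }

lemma Ncount_mat (p r m : ℕ) (hp : 2 ≤ p) (hm : r + 2 ≤ m) :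
    ∀ (i : ℕ) (k : Fin (m - r - 1)),
      Ncount p r m (i + 1) ((k : ℕ) + 1) = ((Umat p r m) ^ i * X0mat p r m) k 0 := by
  intro i
  induction i with
  | zero =>
    intro k
    rw [pow_zero, Matrix.one_mul, Ncount_one p r m _ (by omega), X0mat]
    congr 1
  | succ n ih =>
    intro k
    rw [Ncount_step p r m (n + 1) ((k : ℕ) + 1) hp hm (by omega)]
    have hpow : (Umat p r m) ^ (n + 1) = Umat p r m * (Umat p r m) ^ n := pow_succ' _ _
    rw [hpow, Matrix.mul_assoc, Matrix.mul_apply]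
    refine Finset.sum_congr rfl fun k2 _ => ?_
    rw [ih k2, Umat]
    congr 2

/-- `c_{p,r,m,e} = Y_0 · U^{e−2} · X_0`. -/
theorem stmt_10 (p r m e : ℕ) (hp : p.Prime) (hr : 0 < r) (hm : r + 2 ≤ m)
    (he : 2 ≤ e) :
    cSeq p r m e = (Y0mat p r m * (Umat p r m) ^ (e - 2) * X0mat p r m) 0 0 := by
  have hp2 := hp.two_le
  obtain ⟨E, rfl⟩ : ∃ E, e = E + 2 := ⟨e - 2, by omega⟩
  have he2 : E + 2 - 2 = E := by omega
  rw [cSeq_top p r m E hp2 hm, he2, Matrix.mul_assoc, Matrix.mul_apply]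
  refine Finset.sum_congr rfl fun k _ => ?_
  rw [Ncount_mat p r m hp2 hm E k]
  rfl
end

section
/- Let p be a prime and let r, m, e be positive integers with m = r+2 and e ≥ 2. Then c_{p,r,m,e} = binom(rp, m−1) · binom(p+m−2, m−1)^{e−2} · binom(p+m−3, m−1). -/
open Finset

theorem card_tuples_sum_eq_choose (m k : ℕ) :
    Nat.card {f : Fin m → ℕ // ∑ j, f j = k} = (m + k - 1).choose k := by
  rw [← Nat.card_congr (Sym.equivNatSumOfFintype (Fin m) k), Nat.card_eq_fintype_card,
    Sym.card_sym_eq_choose, Fintype.card_fin]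

theorem card_digit_tuples_sum_eq_choose {m p s k : ℕ} (hk : k < p)
    (hs : s + k = m * (p - 1)) :
    Nat.card {d : Fin m → ℕ // (∀ j, d j < p) ∧ ∑ j, d j = s} = (m + k - 1).choose k := by
  have sum_compl (d : Fin m → ℕ) (hd : ∀ j, d j < p) :
      ∑ j, (p - 1 - d j) + ∑ j, d j = m * (p - 1) := by
    rw [← sum_add_distrib,
      sum_congr rfl fun j _ => Nat.sub_add_cancel (Nat.le_sub_one_of_lt (hd j))]
    simp
  have le_sum (b : Fin m → ℕ) (j : Fin m) : b j ≤ ∑ j, b j :=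
    single_le_sum (fun _ _ => Nat.zero_le _) (mem_univ j)
  rw [← card_tuples_sum_eq_choose]
  refine Nat.card_congr
    { toFun := fun d => ⟨fun j => p - 1 - d.1 j, by
        have := sum_compl d.1 d.2.1; dsimp only; omega⟩
      invFun := fun b => ⟨fun j => p - 1 - b.1 j, fun j => by dsimp only; omega, ?_⟩
      left_inv := fun d => Subtype.ext <| funext fun j => by have := d.2.1 j; dsimp only; omega
      right_inv := fun b => Subtype.ext <| funext fun j => by
        have := le_sum b.1 j; have := b.2; dsimp only; omega }
  have hb : ∀ j, b.1 j < p := fun j => by have := le_sum b.1 j; have := b.2; omega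
  have := sum_compl b.1 hb
  have := b.2
  dsimp only
  omega

theorem Finset.sum_nat_mod_mul {ι : Type*} (s : Finset ι) (f : ι → ℕ) (p q : ℕ) :
    ∑ j ∈ s, f j % (p * q) = ∑ j ∈ s, f j % p + p * ∑ j ∈ s, f j / p % q := by
  rw [mul_sum, ← sum_add_distrib]
  exact sum_congr rfl fun _ _ => Nat.mod_mul

theorem Finset.sum_nat_eq_sum_mod_add_mul_sum_div {ι : Type*} (s : Finset ι) (f : ι → ℕ)
    (p : ℕ) : ∑ j ∈ s, f j = ∑ j ∈ s, f j % p + p * ∑ j ∈ s, f j / p := by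
  rw [mul_sum, ← sum_add_distrib]
  exact sum_congr rfl fun _ _ => (Nat.mod_add_div _ _).symm

def digitSplitEquiv {ι : Type*} {p : ℕ} (hp : 0 < p) :
    (ι → ℕ) ≃ {d : ι → ℕ // ∀ j, d j < p} × (ι → ℕ) where
  toFun a := (⟨fun j => a j % p, fun j => Nat.mod_lt _ hp⟩, fun j => a j / p)
  invFun x := fun j => x.1.1 j + p * x.2 j
  left_inv a := funext fun j => Nat.mod_add_div _ _
  right_inv x := by
    ext j
    · simp [Nat.mod_eq_of_lt (x.1.2 j)]
    · simp [Nat.add_mul_div_left _ _ hp, Nat.div_eq_of_lt (x.1.2 j)]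

section Peel

variable {ι : Type*} [Fintype ι] {p s T E : ℕ} {F g : ℕ → ℕ}

theorem sum_mod_pow_eq_iff_digits (hp : 0 < p) (hF1 : F 1 = s)
    (hF : ∀ i, 1 ≤ i → i ≤ E → F (i + 1) = s + p * g i) (a : ι → ℕ) :
    (∑ j, a j = s + p * T ∧ ∀ i, 1 ≤ i → i ≤ E + 1 → ∑ j, a j % p ^ i = F i) ↔
      ∑ j, a j % p = s ∧
        (∑ j, a j / p = T ∧ ∀ i, 1 ≤ i → i ≤ E → ∑ j, a j / p % p ^ i = g i) := by
  have sum_mod_pow_succ (i : ℕ) :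
      ∑ j, a j % p ^ (i + 1) = ∑ j, a j % p + p * ∑ j, a j / p % p ^ i := by
    rw [pow_succ', sum_nat_mod_mul]
  rw [sum_nat_eq_sum_mod_add_mul_sum_div _ a p]
  constructor
  · rintro ⟨hsum, hmod⟩
    have hs : ∑ j, a j % p = s := by simpa [hF1] using hmod 1 le_rfl (by omega)
    refine ⟨hs, Nat.eq_of_mul_eq_mul_left hp (by omega), fun i hi hiE => ?_⟩
    have := hmod (i + 1) (by omega) (by omega)
    rw [sum_mod_pow_succ, hF i hi hiE, hs] at this
    exact Nat.eq_of_mul_eq_mul_left hp (by omega)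
  · rintro ⟨hs, hT, hg⟩
    refine ⟨by rw [hs, hT], fun i hi hiE => ?_⟩
    obtain ⟨i, rfl⟩ := Nat.exists_eq_add_of_le' hi
    rw [sum_mod_pow_succ, hs]
    rcases i.eq_zero_or_pos with rfl | hi0
    · simp only [zero_add, pow_zero, Nat.mod_one, sum_const_zero, mul_zero, add_zero, hF1]
    · rw [hg i hi0 (by omega), hF i hi0 (by omega)]

theorem card_sum_mod_pow_eq_mul (hp : 0 < p) (hF1 : F 1 = s)
    (hF : ∀ i, 1 ≤ i → i ≤ E → F (i + 1) = s + p * g i) :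
    Nat.card {a : ι → ℕ // ∑ j, a j = s + p * T ∧
        ∀ i, 1 ≤ i → i ≤ E + 1 → ∑ j, a j % p ^ i = F i} =
      Nat.card {d : ι → ℕ // (∀ j, d j < p) ∧ ∑ j, d j = s} *
        Nat.card {b : ι → ℕ // ∑ j, b j = T ∧
          ∀ i, 1 ≤ i → i ≤ E → ∑ j, b j % p ^ i = g i} := by
  rw [← Nat.card_prod]
  exact Nat.card_congr <|
    ((digitSplitEquiv hp).subtypeEquiv (sum_mod_pow_eq_iff_digits hp hF1 hF)).trans <|
      Equiv.subtypeProdEquivProd.trans <|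
        (Equiv.subtypeSubtypeEquivSubtypeInter _ _).prodCongr (Equiv.refl _)

end Peel

theorem card_sum_mod_pow_eq_mul_pow_sub_one {m p c r : ℕ} (hm : m = c + 1) (hp : 0 < p)
    (hc : c ≤ r * p) (n : ℕ) :
    Nat.card {b : Fin m → ℕ // ∑ j, b j = r * p ^ (n + 1) - c ∧
        ∀ i, 1 ≤ i → i ≤ n → ∑ j, b j % p ^ i = c * (p ^ i - 1)} =
      (p + c - 1).choose c ^ n * (r * p).choose c := by
  subst hm
  induction n with
  | zero =>
    rw [Nat.card_congr (Equiv.subtypeEquivRight fun b =>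
      and_iff_left_of_imp fun _ i hi hi0 => absurd hi (by omega)), card_tuples_sum_eq_choose,
      zero_add, pow_one, show c + 1 + (r * p - c) - 1 = r * p by omega, Nat.choose_symm hc,
      pow_zero, one_mul]
  | succ n ih =>
    have hcn : c ≤ r * p ^ (n + 1) :=
      hc.trans (Nat.mul_le_mul_left r (Nat.le_self_pow n.succ_ne_zero p))
    have hsum : r * p ^ (n + 1 + 1) - c = c * (p - 1) + p * (r * p ^ (n + 1) - c) := by
      zify [hcn, hc.trans (Nat.mul_le_mul_left r (Nat.le_self_pow (n + 1).succ_ne_zero p)), hp]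
      ring
    rw [hsum]
    refine (card_sum_mod_pow_eq_mul (F := fun i => c * (p ^ i - 1))
      (g := fun i => c * (p ^ i - 1)) hp (by rw [pow_one]) fun i _ _ => ?_).trans ?_
    · zify [Nat.one_le_pow i p hp, Nat.one_le_pow (i + 1) p hp, hp]
      ring
    rw [ih, card_digit_tuples_sum_eq_choose (k := p - 1) (by omega) (by zify [hp]; ring),
      show c + 1 + (p - 1) - 1 = p + c - 1 by omega,
      Nat.choose_symm_of_eq_add (show p + c - 1 = p - 1 + c by omega), pow_succ]
    ring

theorem Nat.ModEq.eq_of_le_of_lt_add {q t x : ℕ} (h : x ≡ t [MOD q]) (ht : t ≤ x)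
    (hx : x < t + q) : x = t := by
  have := Nat.eq_zero_of_dvd_of_lt ((Nat.modEq_iff_dvd' ht).mp h.symm) (by omega)
  omega

theorem sum_mod_le_card_mul_sub_one {ι : Type*} [Fintype ι] (a : ι → ℕ) {q : ℕ}
    (hq : 0 < q) : ∑ j, a j % q ≤ Fintype.card ι * (q - 1) :=
  calc ∑ j, a j % q ≤ ∑ _j : ι, (q - 1) :=
        sum_le_sum fun j _ => Nat.le_sub_one_of_lt (Nat.mod_lt _ hq)
    _ = Fintype.card ι * (q - 1) := by simp

theorem mul_pow_sub_one_modEq {p r i e : ℕ} (hp : 0 < p) (hie : i ≤ e) :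
    r * (p ^ e - 1) ≡ r * (p ^ i - 1) + p ^ i [MOD p ^ i] := by
  refine Nat.ModEq.add_right_cancel' r ?_
  have h1 : r * (p ^ e - 1) + r = r * p ^ e := by
    zify [Nat.one_le_pow e p hp]; ring
  have h2 : r * (p ^ i - 1) + p ^ i + r = (r + 1) * p ^ i := by
    zify [Nat.one_le_pow i p hp]; ring
  rw [h1, h2]
  exact (Nat.modEq_zero_iff_dvd.2 (dvd_mul_of_dvd_right (pow_dvd_pow p hie) r)).trans
    (Nat.modEq_zero_iff_dvd.2 (dvd_mul_left _ _)).symm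

theorem cSeq_eq_card_sum_mod_pow_eq {p : ℕ} (r e : ℕ) (hp : 0 < p) :
    cSeq p r (r + 2) e = Nat.card {a : Fin (r + 2) → ℕ // ∑ j, a j = r * (p ^ e - 1) ∧
      ∀ i, 1 ≤ i → i ≤ e - 1 → ∑ j, a j % p ^ i = r * (p ^ i - 1) + p ^ i} := by
  rw [cSeq]
  refine Nat.card_congr <| Equiv.subtypeEquivRight fun a => and_congr_right fun hsum =>
    forall_congr' fun i => imp_congr_right fun _ => imp_congr_right fun hie =>
      ⟨fun ht => Nat.ModEq.eq_of_le_of_lt_add (q := p ^ i) ?_ ht ?_, fun h => h.ge⟩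
  · calc ∑ j, a j % p ^ i ≡ ∑ j, a j [MOD p ^ i] := (sum_nat_mod _ _ _).symm
      _ = r * (p ^ e - 1) := hsum
      _ ≡ _ [MOD p ^ i] := mul_pow_sub_one_modEq hp (by omega)
  · have hle := sum_mod_le_card_mul_sub_one a (pow_pos hp i)
    rw [Fintype.card_fin] at hle
    have hexpand : (r + 2) * (p ^ i - 1) = r * (p ^ i - 1) + 2 * (p ^ i - 1) := by ring
    have := pow_pos hp i
    omega

/-- when `m = r+2`,
`c_{p,r,m,e} = binom(rp, m−1) · binom(p+m−2, m−1)^{e−2} · binom(p+m−3, m−1)`. -/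
theorem stmt_11 (p r m e : ℕ) (hp : p.Prime) (hr : 0 < r) (he : 2 ≤ e)
    (hm : m = r + 2) :
    cSeq p r m e =
      Nat.choose (r * p) (m - 1) *
        Nat.choose (p + m - 2) (m - 1) ^ (e - 2) *
        Nat.choose (p + m - 3) (m - 1) := by
  subst hm
  obtain ⟨n, rfl⟩ : ∃ n, e = n + 2 := ⟨e - 2, by omega⟩
  have hp2 := hp.two_le
  have hc : r + 1 ≤ r * p := by nlinarith
  have hsum :
      r * (p ^ (n + 2) - 1) = (r * (p - 1) + p) + p * (r * p ^ (n + 1) - (r + 1)) := by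
    have hcn := hc.trans (Nat.mul_le_mul_left r (Nat.le_self_pow n.succ_ne_zero p))
    zify [hcn, Nat.one_le_pow (n + 2) p hp.pos, hp.pos]
    ring
  rw [cSeq_eq_card_sum_mod_pow_eq r _ hp.pos, Nat.add_sub_cancel, hsum]
  refine (card_sum_mod_pow_eq_mul (F := fun i => r * (p ^ i - 1) + p ^ i)
    (g := fun i => (r + 1) * (p ^ i - 1)) hp.pos (by rw [pow_one]) fun i _ _ => ?_).trans ?_
  · zify [Nat.one_le_pow i p hp.pos, Nat.one_le_pow (i + 1) p hp.pos, hp.pos]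
    ring
  rw [card_digit_tuples_sum_eq_choose (k := p - 2) (by omega) (by zify [hp.pos, hp2]; ring),
    card_sum_mod_pow_eq_mul_pow_sub_one rfl hp.pos hc n,
    show r + 2 + (p - 2) - 1 = p + (r + 2) - 3 by omega,
    show p + (r + 1) - 1 = p + (r + 2) - 2 by omega, show r + 2 - 1 = r + 1 from rfl,
    Nat.choose_symm_of_eq_add (show p + (r + 2) - 3 = p - 2 + (r + 1) by omega)]
  ring
end

section
/- Let p be a prime and let r, m be positive integers with m = r+2. Then the sequence e ↦ (c_{p,r,m,e})^{1/e} (for e ≥ 2) converges, as e → ∞, to binom(p+m−2, m−1). (Equivalently, the complexity of T(V_{m−2}(K[x_1,…,x_m])) equals binom(p+m−2, m−1), so the Frobenius complexity of the determinantal ring S_{m,2} equals log_p binom(p+m−2, m−1).) -/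
/-!
For `m = r + 2` the residue sum `∑ (a_j mod p^i)` is at most `(r+2)(p^i-1)` and is congruent to
`∑ a_j ≡ -r` modulo `p^i`, so the inequality defining `cSeq` forces the equality
`∑ (a_j mod p^i) = (r+1)p^i - r`. Conditions of this exact form peel off one base-`p` digit at a
time: writing `a_j = d_j + p b_j` with `d_j < p`, the digits must have sum `(r+1)p - c` and the
quotients `b` satisfy conditions of the same form one level lower, now with `c = r + 1`.
Hence `c_e = C N^(e-2)` with `C > 0` and `N` the number of `(r+2)`-tuples of digits with sum
`(r+1)(p-1)`; reflecting `d ↦ p - 1 - d` identifies `N` with `binom(p+r, r+1)`, and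
`(C N^(e-2))^(1/e) → N`.
-/

open Filter Topology

def residueSumSet (ι : Type*) [Fintype ι] (p n S : ℕ) (t : ℕ → ℕ) : Set (ι → ℕ) :=
  {a | ∑ j, a j = S ∧ ∀ i, 0 < i → i < n → ∑ j, a j % p ^ i = t i}

def digitTuples (ι : Type*) [Fintype ι] (p s : ℕ) : Set (ι → ℕ) :=
  {d | (∀ j, d j < p) ∧ ∑ j, d j = s}

def tightTuples (ι : Type*) [Fintype ι] (p r c n : ℕ) : Set (ι → ℕ) :=
  residueSumSet ι p n (r * p ^ n - c) fun i => (r + 1) * p ^ i - c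

section DigitSplit

variable {ι : Type*} [Fintype ι]

def digitSplit {p : ℕ} (hp : 0 < p) :
    (ι → ℕ) ≃ {d : ι → ℕ // ∀ j, d j < p} × (ι → ℕ) where
  toFun a := (⟨fun j => a j % p, fun j => Nat.mod_lt _ hp⟩, fun j => a j / p)
  invFun x := fun j => x.1.1 j + p * x.2 j
  left_inv a := funext fun j => Nat.mod_add_div (a j) p
  right_inv x := by
    ext j
    · simp [Nat.mod_eq_of_lt (x.1.2 j)]
    · simp [Nat.add_mul_div_left _ _ hp, Nat.div_eq_of_lt (x.1.2 j)]

lemma add_mul_mod_pow_succ {p d b : ℕ} (hd : d < p) (i : ℕ) :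
    (d + p * b) % p ^ (i + 1) = d + p * (b % p ^ i) := by
  rw [pow_succ', Nat.mod_mul, Nat.add_mul_mod_self_left, Nat.mod_eq_of_lt hd,
    Nat.add_mul_div_left _ _ (by omega), Nat.div_eq_of_lt hd, zero_add]

lemma add_mul_mem_residueSumSet_succ_iff {p n S S' s : ℕ} {t u : ℕ → ℕ}
    {d b : ι → ℕ} (hd : ∀ j, d j < p) (hp : 0 < p) (hn : 0 < n) (hS : S = s + p * S')
    (ht₁ : t 1 = s) (ht : ∀ i, 0 < i → t (i + 1) = s + p * u i) :
    (fun j => d j + p * b j) ∈ residueSumSet ι p (n + 1) S t ↔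
      ∑ j, d j = s ∧ b ∈ residueSumSet ι p n S' u := by
  have hmod (i : ℕ) :
      ∑ j, (d j + p * b j) % p ^ (i + 1) = ∑ j, d j + p * ∑ j, b j % p ^ i := by
    simp only [add_mul_mod_pow_succ (hd _), Finset.sum_add_distrib, Finset.mul_sum]
  simp only [residueSumSet, Set.mem_ofPred_eq, Finset.sum_add_distrib, ← Finset.mul_sum]
  constructor
  · rintro ⟨hsum, hres⟩
    have hdsum : ∑ j, d j = s := by
      simpa [Nat.mod_eq_of_lt (hd _), ht₁] using hres 1 one_pos (by omega)
    refine ⟨hdsum, ?_, fun i hi hin => ?_⟩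
    · rw [hS, hdsum] at hsum
      exact Nat.eq_of_mul_eq_mul_left hp (Nat.add_left_cancel hsum)
    · have := hres (i + 1) (by omega) (by omega)
      rw [hmod, ht i hi, hdsum] at this
      exact Nat.eq_of_mul_eq_mul_left hp (Nat.add_left_cancel this)
  · rintro ⟨hdsum, hsum, hres⟩
    refine ⟨by rw [hS, hdsum, hsum], fun i hi hin => ?_⟩
    obtain ⟨i, rfl⟩ : ∃ k, i = k + 1 := ⟨i - 1, by omega⟩
    rcases i.eq_zero_or_pos with rfl | hi'
    · simpa [Nat.mod_eq_of_lt (hd _), ht₁] using hdsum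
    · rw [hmod, hdsum, hres _ hi' (by omega), ht _ hi']

lemma card_residueSumSet_succ {p n S S' s : ℕ} {t u : ℕ → ℕ} (hp : 0 < p) (hn : 0 < n)
    (hS : S = s + p * S') (ht₁ : t 1 = s) (ht : ∀ i, 0 < i → t (i + 1) = s + p * u i) :
    Nat.card (residueSumSet ι p (n + 1) S t) =
      Nat.card (digitTuples ι p s) * Nat.card (residueSumSet ι p n S' u) := by
  rw [← Nat.card_prod]
  refine Nat.card_congr <| ((digitSplit hp).symm.subtypeEquiv fun x =>
    (add_mul_mem_residueSumSet_succ_iff x.1.2 hp hn hS ht₁ ht).symm).symm.trans ?_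
  exact Equiv.subtypeProdEquivProd.trans
    ((Equiv.subtypeSubtypeEquivSubtypeInter (fun d : ι → ℕ => ∀ j, d j < p)
      (fun d => ∑ j, d j = s)).prodCongr (Equiv.refl _))

lemma residueSumSet_one (p S : ℕ) (t : ℕ → ℕ) :
    residueSumSet ι p 1 S t = {a | ∑ j, a j = S} := by
  ext a
  simp only [residueSumSet, Set.mem_ofPred_eq]
  exact ⟨And.left, fun h => ⟨h, fun i hi hi' => by omega⟩⟩

lemma card_sum_eq_choose [DecidableEq ι] (c : ℕ) :
    Nat.card {d : ι → ℕ // ∑ j, d j = c} = (Fintype.card ι + c - 1).choose c := by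
  rw [← Nat.card_congr (Sym.equivNatSumOfFintype ι c), Nat.card_eq_fintype_card,
    Sym.card_sym_eq_choose]

lemma sum_sub_add_sum {p : ℕ} {d : ι → ℕ} (hd : ∀ j, d j ≤ p) :
    ∑ j, (p - d j) + ∑ j, d j = Fintype.card ι * p := by
  rw [← Finset.sum_add_distrib, ← smul_eq_mul, ← Finset.card_univ, ← Finset.sum_const]
  exact Finset.sum_congr rfl fun j _ => Nat.sub_add_cancel (hd j)

/-- Reflect every digit, `d ↦ p - 1 - d`; when `c < p` the digit bound is automatic. -/
lemma card_digitTuples {p s c : ℕ} (hc : c < p) (hsc : s + c = Fintype.card ι * (p - 1)) :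
    Nat.card (digitTuples ι p s) = Nat.card {d : ι → ℕ // ∑ j, d j = c} := by
  have le_of_sum_eq {d : ι → ℕ} (h : ∑ j, d j = c) (j : ι) : d j ≤ p - 1 :=
    (Finset.single_le_sum (fun _ _ => Nat.zero_le _) (Finset.mem_univ j)).trans (by omega)
  refine Nat.card_congr
    { toFun d := ⟨fun j => p - 1 - d.1 j, ?_⟩
      invFun d := ⟨fun j => p - 1 - d.1 j, fun j => (Nat.sub_le _ _).trans_lt (by omega), ?_⟩
      left_inv d := ?_
      right_inv d := ?_ }
  · have := sum_sub_add_sum fun j => Nat.le_sub_one_of_lt (d.2.1 j)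
    rw [d.2.2] at this
    dsimp only
    omega
  · have := sum_sub_add_sum (le_of_sum_eq d.2)
    rw [d.2] at this
    dsimp only
    omega
  · ext j
    have := d.2.1 j
    dsimp only
    omega
  · ext j
    have := le_of_sum_eq d.2 j
    dsimp only
    omega

end DigitSplit

section TightTuples

variable {ι : Type*} [Fintype ι]

lemma card_tightTuples_succ {p r c n : ℕ} (hp : 2 ≤ p) (hr : 0 < r) (hc : c ≤ r + 1)
    (hn : 0 < n) :
    Nat.card (tightTuples ι p r c (n + 1)) =
      Nat.card (digitTuples ι p ((r + 1) * p - c)) * Nat.card (tightTuples ι p r (r + 1) n) := by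
  have hcp : c ≤ (r + 1) * p := hc.trans (Nat.le_mul_of_pos_right _ (by omega))
  have hpn : p ≤ p ^ n := Nat.le_self_pow hn.ne' p
  have hrp : r + 1 ≤ r * p ^ n := by nlinarith
  refine card_residueSumSet_succ (by omega) hn ?_ (by rw [pow_one]) fun i _ => ?_
  · have hcr : c ≤ r * p ^ (n + 1) := by rw [pow_succ]; nlinarith
    zify [hcp, hrp, hcr]
    ring
  · have hpi : r + 1 ≤ (r + 1) * p ^ i := Nat.le_mul_of_pos_right _ (by positivity)
    have hci : c ≤ (r + 1) * p ^ (i + 1) := by rw [pow_succ]; nlinarith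
    zify [hcp, hci, hpi]
    ring

lemma card_tightTuples_succ_eq_pow {p r : ℕ} (hp : 2 ≤ p) (hr : 0 < r) (n : ℕ) :
    Nat.card (tightTuples ι p r (r + 1) (n + 1)) =
      Nat.card (digitTuples ι p ((r + 1) * p - (r + 1))) ^ n *
        Nat.card {a : ι → ℕ // ∑ j, a j = r * p - (r + 1)} := by
  induction n with
  | zero =>
    simp only [tightTuples, residueSumSet_one, pow_zero, one_mul, zero_add, pow_one]
    rfl
  | succ n ih =>
    rw [card_tightTuples_succ hp hr le_rfl n.succ_pos, ih, pow_succ]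
    ring

end TightTuples

lemma le_sum_mod_iff_eq {r q : ℕ} {a : Fin (r + 2) → ℕ} (hq : 0 < q)
    (hdvd : q ∣ ∑ j, a j + r) :
    r * (q - 1) + q ≤ ∑ j, a j % q ↔ ∑ j, a j % q = (r + 1) * q - r := by
  have hrq : r ≤ (r + 1) * q := (Nat.le_succ r).trans (Nat.le_mul_of_pos_right _ hq)
  constructor
  · intro hlo
    have hmodEq : ∑ j, a j % q + r ≡ ∑ j, a j + r [MOD q] :=
      Nat.ModEq.add_right r (Finset.sum_nat_mod _ _ _).symm
    have hdvd' : q ∣ ∑ j, a j % q + r :=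
      Nat.modEq_zero_iff_dvd.1 (hmodEq.trans (Nat.modEq_zero_iff_dvd.2 hdvd))
    have hhi : ∑ j, a j % q ≤ (r + 2) * (q - 1) :=
      calc ∑ j, a j % q ≤ ∑ _j : Fin (r + 2), (q - 1) :=
            Finset.sum_le_sum fun j _ => Nat.le_sub_one_of_lt (Nat.mod_lt (a j) hq)
        _ = (r + 2) * (q - 1) := by simp
    have hdiv : (∑ j, a j % q + r) / q = r + 1 := by
      apply Nat.div_eq_of_lt_le
      · zify [hq] at hlo ⊢
        linarith
      · zify [hq] at hhi ⊢
        linarith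
    have := Nat.mul_div_cancel' hdvd'
    rw [hdiv, mul_comm] at this
    omega
  · intro h
    zify [hrq, hq] at h ⊢
    linarith

lemma cSeq_eq_card_tightTuples {p : ℕ} (hp : 0 < p) (r e : ℕ) :
    cSeq p r (r + 2) e = Nat.card (tightTuples (Fin (r + 2)) p r r e) := by
  refine Nat.card_congr (Equiv.subtypeEquivRight fun a => ?_)
  simp only [tightTuples, residueSumSet, Set.mem_ofPred_eq]
  rw [Nat.mul_sub_one]
  refine and_congr_right fun hsum => forall_congr' fun i => ?_
  have hrp : r ≤ r * p ^ e := Nat.le_mul_of_pos_right r (by positivity)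
  have hdvd (hie : i ≤ e) : p ^ i ∣ ∑ j, a j + r := by
    rw [hsum, Nat.sub_add_cancel hrp]
    exact Dvd.dvd.mul_left (pow_dvd_pow p hie) r
  have hpi : 0 < p ^ i := by positivity
  exact ⟨fun h hi hie => (le_sum_mod_iff_eq hpi (hdvd (by omega))).1 (h hi (by omega)),
    fun h hi hie => (le_sum_mod_iff_eq hpi (hdvd (by omega))).2 (h hi (by omega))⟩

lemma exists_cSeq_eq_mul_pow {p r : ℕ} (hp : 2 ≤ p) (hr : 0 < r) :
    ∃ C > 0, ∀ e, 2 ≤ e → cSeq p r (r + 2) e = C * (p + r).choose (r + 1) ^ (e - 2) := by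
  have card_digitTuples_eq {s : ℕ} (c : ℕ) (hc : c < p) (hsc : s + c = (r + 2) * (p - 1)) :
      Nat.card (digitTuples (Fin (r + 2)) p s) = (r + 1 + c).choose c := by
    rw [card_digitTuples hc (by rwa [Fintype.card_fin]), card_sum_eq_choose, Fintype.card_fin]
    congr 1
    omega
  have hrp : r + 1 ≤ (r + 1) * p := Nat.le_mul_of_pos_right _ (by omega)
  have hN : Nat.card (digitTuples (Fin (r + 2)) p ((r + 1) * p - (r + 1))) =
      (p + r).choose (r + 1) := by
    rw [card_digitTuples_eq (p - 1) (by omega) (by zify [hrp, (by omega : 1 ≤ p)]; ring),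
      show r + 1 + (p - 1) = p + r by omega]
    exact Nat.choose_symm_of_eq_add (by omega)
  refine ⟨Nat.card (digitTuples (Fin (r + 2)) p ((r + 1) * p - r)) *
    Nat.card {a : Fin (r + 2) → ℕ // ∑ j, a j = r * p - (r + 1)}, Nat.mul_pos ?_ ?_,
    fun e he => ?_⟩
  · rw [card_digitTuples_eq (p - 2) (by omega) (by
      zify [hrp, hp, (by omega : 1 ≤ p), (by omega : r ≤ (r + 1) * p)]; ring)]
    exact Nat.choose_pos (by omega)
  · rw [card_sum_eq_choose, Fintype.card_fin]
    exact Nat.choose_pos (by omega)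
  · obtain ⟨n, rfl⟩ : ∃ n, e = n + 2 := ⟨e - 2, by omega⟩
    rw [cSeq_eq_card_tightTuples (by omega), card_tightTuples_succ hp hr r.le_succ n.succ_pos,
      card_tightTuples_succ_eq_pow hp hr, hN, Nat.add_sub_cancel]
    ring

lemma tendsto_mul_pow_sub_rpow_inv {C N : ℝ} (hC : 0 < C) (hN : 0 < N) (k : ℕ) :
    Tendsto (fun e : ℕ => (C * N ^ (e - k)) ^ (e : ℝ)⁻¹) atTop (𝓝 N) := by
  have hC' : 0 < C / N ^ k := div_pos hC (pow_pos hN k)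
  have h : Tendsto (fun e : ℕ => (C / N ^ k) ^ (e : ℝ)⁻¹) atTop (𝓝 1) := by
    simpa [Function.comp_def] using (Real.continuousAt_const_rpow hC'.ne').tendsto.comp
      (tendsto_inv_atTop_zero.comp tendsto_natCast_atTop_atTop)
  have hlim : Tendsto (fun e : ℕ => (C / N ^ k) ^ (e : ℝ)⁻¹ * N) atTop (𝓝 N) := by
    simpa using h.mul_const N
  refine hlim.congr' ?_
  filter_upwards [eventually_ge_atTop (max k 1)] with e he
  have hCN : C * N ^ (e - k) = C / N ^ k * N ^ e := by
    rw [← pow_sub_mul_pow N (le_of_max_le_left he)]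
    field_simp
  rw [hCN, Real.mul_rpow hC'.le (by positivity), Real.pow_rpow_inv_natCast hN.le (by omega)]

/-- when `m = r+2`, the sequence `e ↦ (c_{p,r,m,e})^{1/e}` converges
to `binom(p+m−2, m−1)`; this is the complexity of `T(V_{m−2}(K[x_1,…,x_m]))` and
its `log_p` is the Frobenius complexity of the determinantal ring `S_{m,2}`. -/
theorem stmt_12 (p r m : ℕ) (hp : p.Prime) (hr : 0 < r) (hm : m = r + 2) :
    Filter.Tendsto (fun e : ℕ => (cSeq p r m e : ℝ) ^ ((e : ℝ)⁻¹))
      Filter.atTop (nhds ((Nat.choose (p + m - 2) (m - 1) : ℝ))) := by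
  subst hm
  have hp2 := hp.two_le
  obtain ⟨C, hC, hcSeq⟩ := exists_cSeq_eq_mul_pow hp2 hr
  have hN : 0 < (p + r).choose (r + 1) := Nat.choose_pos (by omega)
  rw [show p + (r + 2) - 2 = p + r by omega, show r + 2 - 1 = r + 1 by omega]
  refine (tendsto_mul_pow_sub_rpow_inv (Nat.cast_pos.2 hC) (Nat.cast_pos.2 hN) 2).congr' ?_
  filter_upwards [eventually_ge_atTop 2] with e he
  rw [hcSeq e he]
  push_cast
  rfl
end

section
/- Let p be a prime and m a positive integer. If i and j are integers with 0 ≤ i ≤ j ≤ ⌈m(p−1)/2⌉, then M_{p,m}(i) ≤ M_{p,m}(j); likewise, if ⌈m(p−1)/2⌉ ≤ j ≤ i ≤ m(p−1), then M_{p,m}(i) ≤ M_{p,m}(j). -/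
open Finset

theorem Mpm_eq_sum_ite (p m : ℕ) (i : ℤ) :
    Mpm p m i = ∑ b : Fin m → Fin p, if ∑ j, ((b j : ℕ) : ℤ) = i then 1 else 0 :=
  card_filter _ _

theorem Mpm_succ (p m : ℕ) (i : ℤ) :
    Mpm p (m + 1) i = ∑ k ∈ range p, Mpm p m (i - k) := by
  rw [← Fin.sum_univ_eq_sum_range (fun k => Mpm p m (i - k)), Mpm_eq_sum_ite,
    ← (Fin.consEquiv fun _ => Fin p).sum_comp, Fintype.sum_prod_type]
  refine sum_congr rfl fun a _ => ?_
  rw [Mpm_eq_sum_ite]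
  refine sum_congr rfl fun c _ => ?_
  simp only [Fin.consEquiv_apply, Fin.sum_univ_succ, Fin.cons_zero, Fin.cons_succ,
    eq_sub_iff_add_eq']

theorem Mpm_eq_zero_of_neg (p m : ℕ) {i : ℤ} (hi : i < 0) : Mpm p m i = 0 := by
  rw [Mpm, card_eq_zero, filter_eq_empty_iff]
  intro b _
  have : (0 : ℤ) ≤ ∑ j, ((b j : ℕ) : ℤ) := sum_nonneg fun j _ => Int.natCast_nonneg _
  omega

theorem sum_val_rev (p m : ℕ) (b : Fin m → Fin p) :
    ∑ j, (((b j).rev : ℕ) : ℤ) = m * ((p : ℤ) - 1) - ∑ j, ((b j : ℕ) : ℤ) := by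
  have h (j : Fin m) : (((b j).rev : ℕ) : ℤ) = (p : ℤ) - 1 - (b j : ℕ) := by
    have := (b j).is_lt
    rw [Fin.val_rev]
    omega
  rw [sum_congr rfl fun j _ => h j, sum_sub_distrib, sum_const, card_univ, Fintype.card_fin,
    nsmul_eq_mul]

theorem Mpm_reflect (p m : ℕ) (i : ℤ) : Mpm p m (m * ((p : ℤ) - 1) - i) = Mpm p m i := by
  let rev : (Fin m → Fin p) ≃ (Fin m → Fin p) := Equiv.piCongrRight fun _ => Fin.revPerm
  rw [Mpm_eq_sum_ite, Mpm_eq_sum_ite, ← rev.sum_comp]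
  refine sum_congr rfl fun b _ => ?_
  simp only [rev, Equiv.piCongrRight_apply, Pi.map_apply, Fin.revPerm_apply, sum_val_rev,
    sub_right_inj]

theorem Mpm_succ_sub_one_add (p m : ℕ) (v : ℤ) :
    Mpm p (m + 1) (v - 1) + Mpm p m v = Mpm p (m + 1) v + Mpm p m (v - p) := by
  rcases p with _ | q
  · simp [Mpm_succ]
  · rw [Mpm_succ, Mpm_succ, sum_range_succ, sum_range_succ']
    simp only [Nat.cast_add, Nat.cast_one, Nat.cast_zero, sub_zero, sub_sub]
    ring_nf

theorem ordConnected_setOf_two_mul_le (N : ℤ) : {x : ℤ | 2 * x ≤ N}.OrdConnected :=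
  ⟨fun _ _ y hy _ hz => show _ ≤ N by linarith [hz.2, show 2 * y ≤ N from hy]⟩

theorem Mpm_sub_le_of_monotoneOn {p m : ℕ}
    (hmono : MonotoneOn (Mpm p m) {x | 2 * x ≤ m * ((p : ℤ) - 1) + 1}) {v : ℤ}
    (hv : 2 * v ≤ (m + 1) * ((p : ℤ) - 1) + 1) : Mpm p m (v - p) ≤ Mpm p m v := by
  by_cases hle : 2 * v ≤ m * ((p : ℤ) - 1) + 1
  · exact hmono (by rw [Set.mem_ofPred_eq]; linarith) hle (by linarith)
  · rw [← Mpm_reflect p m v]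
    exact hmono (by rw [Set.mem_ofPred_eq]; linarith) (by rw [Set.mem_ofPred_eq]; linarith)
      (by linarith)

theorem Mpm_monotoneOn (p : ℕ) :
    ∀ m : ℕ, MonotoneOn (Mpm p m) {x | 2 * x ≤ m * ((p : ℤ) - 1) + 1}
  | 0 => by
    refine monotoneOn_of_le_succ (ordConnected_setOf_two_mul_le _) fun a _ _ ha => ?_
    replace ha : 2 * (a + 1) ≤ 0 * ((p : ℤ) - 1) + 1 := ha
    rw [Mpm_eq_zero_of_neg p 0 (by omega)]
    exact Nat.zero_le _
  | m + 1 => by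
    refine monotoneOn_of_le_succ (ordConnected_setOf_two_mul_le _) fun a _ _ ha => ?_
    replace ha : 2 * (a + 1) ≤ (m + 1 : ℕ) * ((p : ℤ) - 1) + 1 := ha
    have hid := Mpm_succ_sub_one_add p m (a + 1)
    have hcmp := Mpm_sub_le_of_monotoneOn (Mpm_monotoneOn p m) (v := a + 1)
      (by push_cast at ha; linarith)
    rw [add_sub_cancel_right] at hid
    rw [Order.succ_eq_add_one]
    omega

theorem Mpm_antitoneOn (p m : ℕ) : AntitoneOn (Mpm p m) {x | m * ((p : ℤ) - 1) ≤ 2 * x} := by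
  intro a ha b hb hab
  rw [Set.mem_ofPred_eq] at ha hb
  rw [← Mpm_reflect p m a, ← Mpm_reflect p m b]
  exact Mpm_monotoneOn p m (by rw [Set.mem_ofPred_eq]; linarith)
    (by rw [Set.mem_ofPred_eq]; linarith) (by linarith)

theorem stmt_14_general (p m : ℕ) (hp : p.Prime) (i j : ℤ) :
    (0 ≤ i → i ≤ j → j ≤ (((m * (p - 1) + 1) / 2 : ℕ) : ℤ) →
      Mpm p m i ≤ Mpm p m j) ∧
    ((((m * (p - 1) + 1) / 2 : ℕ) : ℤ) ≤ j → j ≤ i → i ≤ (m : ℤ) * (p - 1) →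
      Mpm p m i ≤ Mpm p m j) := by
  have hN : ((m * (p - 1) : ℕ) : ℤ) = m * ((p : ℤ) - 1) := by
    rw [Nat.cast_mul, Nat.cast_sub hp.one_le, Nat.cast_one]
  refine ⟨fun _ hij hj => Mpm_monotoneOn p m ?_ ?_ hij,
    fun hj hji _ => Mpm_antitoneOn p m ?_ ?_ hji⟩ <;> rw [Set.mem_ofPred_eq] <;> omega

/-- `M_{p,m}` is nondecreasing on `[0, ⌈m(p−1)/2⌉]` and
nonincreasing on `[⌈m(p−1)/2⌉, m(p−1)]`. -/
theorem stmt_14 (p m : ℕ) (hp : p.Prime) (hm : 0 < m) (i j : ℤ) :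
    (0 ≤ i → i ≤ j → j ≤ (((m * (p - 1) + 1) / 2 : ℕ) : ℤ) →
      Mpm p m i ≤ Mpm p m j) ∧
    ((((m * (p - 1) + 1) / 2 : ℕ) : ℤ) ≤ j → j ≤ i → i ≤ (m : ℤ) * (p - 1) →
      Mpm p m i ≤ Mpm p m j) :=
  stmt_14_general p m hp i j
end

section
/- Fix positive integers r, m with 1 ≤ r ≤ m−2. For each prime p, let Λ_p := limsup_{e→∞} (c_{p,r,m,e})^{1/e}. Then Λ_p is finite and positive for all sufficiently large primes p, and log Λ_p / log p tends to m−1 as p tends to infinity through the primes. (Equivalently, the Frobenius complexity of the determinantal ring S_{m,n} obtained from the 2×2 minors of an m×n matrix of indeterminates, where n = m−r, tends to m−1 as p → ∞.) -/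
/-- `Lam r m p` is `Λ_p = limsup_{e→∞} (c_{p,r,m,e})^{1/e}`, the complexity of the
ring `T(V_r(K[x_1,…,x_m]))` in characteristic `p`. -/
noncomputable def Lam (r m p : ℕ) : ℝ :=
  Filter.limsup (fun e : ℕ => (cSeq p r m e : ℝ) ^ ((e : ℝ)⁻¹)) Filter.atTop

open Finset Filter Topology

lemma sum_digit_mul_pow_lt {p i : ℕ} {d : ℕ → ℕ} (hd : ∀ k < i, d k < p) :
    ∑ k ∈ range i, d k * p ^ k < p ^ i := by
  induction i with
  | zero => simp
  | succ i ih =>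
    have hlow := ih fun k hk => hd k (by omega)
    have hi : d i + 1 ≤ p := hd i (by omega)
    calc ∑ k ∈ range (i + 1), d k * p ^ k
        < p ^ i + d i * p ^ i := by rw [sum_range_succ]; omega
      _ = (d i + 1) * p ^ i := by ring
      _ ≤ p ^ (i + 1) := by rw [pow_succ']; exact Nat.mul_le_mul_right _ hi

lemma sum_digit_mul_pow_mod_pow {p n i : ℕ} {d : ℕ → ℕ} (hd : ∀ k < n, d k < p) (hi : i ≤ n) :
    (∑ k ∈ range n, d k * p ^ k) % p ^ i = ∑ k ∈ range i, d k * p ^ k := by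
  obtain ⟨l, rfl⟩ := Nat.exists_eq_add_of_le hi
  obtain ⟨c, hc⟩ : p ^ i ∣ ∑ k ∈ range l, d (i + k) * p ^ (i + k) :=
    dvd_sum fun k _ => Dvd.dvd.mul_left (pow_dvd_pow p (Nat.le_add_right i k)) _
  rw [sum_range_add, hc, Nat.add_mul_mod_self_left,
    Nat.mod_eq_of_lt (sum_digit_mul_pow_lt fun k hk => hd k (by omega))]

lemma digit_eq_of_sum_digit_mul_pow_eq {p n k : ℕ} {d d' : ℕ → ℕ} (hd : ∀ k < n, d k < p)
    (hd' : ∀ k < n, d' k < p) (h : ∑ k ∈ range n, d k * p ^ k = ∑ k ∈ range n, d' k * p ^ k)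
    (hk : k < n) : d k = d' k := by
  have step : ∀ {d : ℕ → ℕ}, (∀ k < n, d k < p) → (∑ k ∈ range n, d k * p ^ k) % p ^ (k + 1)
      = (∑ k ∈ range n, d k * p ^ k) % p ^ k + d k * p ^ k := fun hd => by
    rw [sum_digit_mul_pow_mod_pow hd hk, sum_digit_mul_pow_mod_pow hd hk.le, sum_range_succ]
  have hpk : 0 < p ^ k := pow_pos (by have := hd k hk; omega) k
  have := step hd
  rw [h, step hd'] at this
  exact Nat.eq_of_mul_eq_mul_right hpk (by omega)

lemma sum_sum_digit_mul_pow_mod_pow {ι : Type*} (s : Finset ι) {p n i : ℕ} {D : ℕ → ι → ℕ}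
    (hD : ∀ k < n, ∀ j, D k j < p) (hi : i ≤ n) :
    ∑ j ∈ s, (∑ k ∈ range n, D k j * p ^ k) % p ^ i = ∑ k ∈ range i, (∑ j ∈ s, D k j) * p ^ k := by
  rw [sum_congr rfl fun j _ => sum_digit_mul_pow_mod_pow (fun k hk => hD k hk j) hi, sum_comm]
  simp_rw [sum_mul]

def digitColumns (p m S : ℕ) : Finset (Fin m → ℕ) :=
  {c ∈ Fintype.piFinset fun _ => range p | ∑ j, c j = S}

lemma mem_digitColumns {p m S : ℕ} {c : Fin m → ℕ} :
    c ∈ digitColumns p m S ↔ (∀ j, c j < p) ∧ ∑ j, c j = S := by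
  simp [digitColumns]

lemma digitColumns_nonempty {p m S : ℕ} (hp : 0 < p) (hS : S ≤ m * (p - 1)) :
    (digitColumns p m S).Nonempty := by
  induction m generalizing S with
  | zero => exact ⟨0, mem_digitColumns.2 ⟨fun j => j.elim0, by simp_all⟩⟩
  | succ m ih =>
    obtain ⟨c, hc⟩ := ih (S := S - min S (p - 1)) (by rw [Nat.succ_mul] at hS; omega)
    rw [mem_digitColumns] at hc
    refine ⟨Fin.cons (min S (p - 1)) c, mem_digitColumns.2 ⟨fun j => ?_, ?_⟩⟩
    · cases j using Fin.cases <;> simp [hc.1]; omega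
    · rw [Fin.sum_univ_succ]; simp [hc.2]

lemma pow_le_card_digitColumns {p n S b t : ℕ} (hbt : b + t ≤ p) (hlow : S < n * b + p)
    (hup : n * (b + t) ≤ S + n) : t ^ n ≤ #(digitColumns p (n + 1) S) := by
  let col : (Fin n → ℕ) → Fin (n + 1) → ℕ := fun f =>
    Fin.cons (S - ∑ j, (b + f j)) fun j => b + f j
  rw [← card_range t, ← Fintype.card_piFinset_const]
  refine card_le_card_of_injOn col (fun f hf => ?_) fun f _ g _ hfg => ?_
  · rw [mem_coe, Fintype.mem_piFinset] at hf
    simp only [mem_range] at hf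
    have hsum : ∑ j, (b + f j) ≤ n * (b + t) - n := by
      calc ∑ j, (b + f j) ≤ ∑ _j : Fin n, (b + t - 1) :=
            sum_le_sum fun j _ => by have := hf j; omega
        _ = n * (b + t) - n := by simp [Nat.mul_sub]
    have hbase : n * b ≤ ∑ j, (b + f j) := by
      calc n * b = ∑ _j : Fin n, b := by simp
        _ ≤ ∑ j, (b + f j) := sum_le_sum fun j _ => Nat.le_add_right _ _
    refine mem_coe.2 <| mem_digitColumns.2 ⟨fun j => ?_, ?_⟩
    · cases j using Fin.cases
      · simp only [col, Fin.cons_zero]; omega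
      · simp only [col, Fin.cons_succ]; have := hf ‹_›; omega
    · rw [Fin.sum_univ_succ]; simp only [col, Fin.cons_zero, Fin.cons_succ]; omega
  · funext j
    have := congrFun hfg j.succ
    simpa [col] using this

lemma pow_div_le_card_digitColumns {p r n : ℕ} (hp : 1 ≤ p) (hrn : r + 1 ≤ n) :
    (p / n) ^ n ≤ #(digitColumns p (n + 1) ((r + 1) * (p - 1))) := by
  have hn : 0 < n := by omega
  set x := r * (p - 1)
  set b := (x + n - 1) / n
  have hb₁ : n * b ≤ x + n - 1 := Nat.mul_div_le _ n
  have hb₂ : x + n - 1 < n * b + n := by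
    have := Nat.lt_mul_div_succ (x + n - 1) hn; rwa [mul_add_one] at this
  have ht : n * (p / n) ≤ p := Nat.mul_div_le p n
  have hx : x + p ≤ n * p := by
    calc x + p = (r + 1) * (p - 1) + 1 := by simp only [x]; rw [add_one_mul]; omega
      _ ≤ n * (p - 1) + n := add_le_add (Nat.mul_le_mul_right _ hrn) hn
      _ = n * p := by rw [← Nat.mul_add_one, Nat.sub_add_cancel hp]
  have hS : (r + 1) * (p - 1) = x + (p - 1) := add_one_mul _ _
  refine pow_le_card_digitColumns (b := b) ?_ (by omega) (by rw [mul_add]; omega)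
  have : n * (b + p / n) < n * (p + 1) := by rw [mul_add, mul_add_one]; omega
  exact Nat.lt_add_one_iff.1 (Nat.lt_of_mul_lt_mul_left this)

def cTuples (p r m e : ℕ) : Set (Fin m → ℕ) :=
  {a | (∑ j, a j = r * (p ^ e - 1)) ∧
    ∀ i, 1 ≤ i → i ≤ e - 1 → r * (p ^ i - 1) + p ^ i ≤ ∑ j, a j % p ^ i}

lemma cSeq_eq_ncard (p r m e : ℕ) : cSeq p r m e = (cTuples p r m e).ncard := rfl

lemma cTuples_finite (p r m e : ℕ) : (cTuples p r m e).Finite :=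
  (Finset.Nat.antidiagonalTuple m _).finite_toSet.subset fun _ ha =>
    Finset.Nat.mem_antidiagonalTuple.2 ha.1

lemma cSeq_le (p r n e : ℕ) : cSeq p r (n + 1) e ≤ (r * (p ^ e - 1) + 1) ^ n := by
  rw [cSeq_eq_ncard, ← card_range (r * (p ^ e - 1) + 1), ← Fintype.card_piFinset_const,
    ← Set.ncard_coe_finset]
  refine Set.ncard_le_ncard_of_injOn Fin.tail (fun a ha => ?_) fun a ha b hb hab => ?_
  · refine mem_coe.2 <| Fintype.mem_piFinset.2 fun j => mem_range.2 ?_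
    have := single_le_sum (fun j _ => Nat.zero_le (a j)) (mem_univ j.succ)
    rw [ha.1] at this
    exact Nat.lt_succ_of_le this
  · have h0 : a 0 = b 0 := by
      have ha' := ha.1; have hb' := hb.1
      rw [Fin.sum_univ_succ] at ha' hb'
      have : ∑ j : Fin n, a j.succ = ∑ j : Fin n, b j.succ := congrArg (∑ j, · j) hab
      omega
    rw [← Fin.cons_self_tail a, ← Fin.cons_self_tail b, h0, hab]

lemma cSeq_le_mul_pow {p r : ℕ} (n e : ℕ) (hp : 0 < p) (hr : 0 < r) :
    cSeq p r (n + 1) e ≤ r ^ n * (p ^ n) ^ e := by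
  refine (cSeq_le p r n e).trans ?_
  rw [← pow_mul, mul_comm n e, pow_mul, ← mul_pow]
  refine Nat.pow_le_pow_left ?_ n
  have hpe : 0 < p ^ e := pow_pos hp e
  rw [Nat.mul_sub_one]
  have := Nat.le_mul_of_pos_right r hpe
  omega

lemma sum_mul_pow_add_eq {p r i : ℕ} {s : ℕ → ℕ} (hp : 1 ≤ p) (hi : 1 ≤ i)
    (h0 : s 0 = r * (p - 1) + p) (hs : ∀ k, 1 ≤ k → k < i → s k = (r + 1) * (p - 1)) :
    ∑ k ∈ range i, s k * p ^ k + r = (r + 1) * p ^ i := by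
  obtain ⟨q, rfl⟩ := Nat.exists_eq_add_of_le' hp
  simp only [Nat.add_sub_cancel] at h0 hs
  induction i, hi using Nat.le_induction with
  | base => simp [h0]; ring
  | succ i hi ih =>
    rw [sum_range_succ, add_right_comm, ih fun k hk hki => hs k hk (by omega), hs i hi (by omega)]
    ring

lemma digits_mem_cTuples {p r m E : ℕ} (hp : 2 ≤ p) (hr : 1 ≤ r) {D : ℕ → Fin m → ℕ}
    (hD : ∀ k j, D k j < p) (h0 : ∑ j, D 0 j = r * (p - 1) + p)
    (hmid : ∀ k, 1 ≤ k → k ≤ E → ∑ j, D k j = (r + 1) * (p - 1))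
    (hlast : ∑ j, D (E + 1) j = r * (p - 1) - 1) :
    (fun j => ∑ k ∈ range (E + 2), D k j * p ^ k) ∈ cTuples p r m (E + 2) := by
  have hres : ∀ i ≤ E + 2, ∑ j, (∑ k ∈ range (E + 2), D k j * p ^ k) % p ^ i
      = ∑ k ∈ range i, (∑ j, D k j) * p ^ k :=
    fun i hi => sum_sum_digit_mul_pow_mod_pow _ (fun k _ j => hD k j) hi
  have hpart : ∀ i, 1 ≤ i → i ≤ E + 1 → ∑ k ∈ range i, (∑ j, D k j) * p ^ k + r = (r + 1) * p ^ i :=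
    fun i hi hiE => sum_mul_pow_add_eq (by omega) hi h0 fun k hk hki => hmid k hk (by omega)
  refine ⟨?_, fun i hi hiE => ?_⟩
  · have hX := hpart (E + 1) (by omega) le_rfl
    have hP : 1 ≤ p ^ (E + 2) := Nat.one_le_pow _ _ (by omega)
    have hc : 1 ≤ r * (p - 1) := Nat.mul_pos (by omega) (by omega)
    have hcols : ∑ j, ∑ k ∈ range (E + 2), D k j * p ^ k
        = ∑ k ∈ range (E + 2), (∑ j, D k j) * p ^ k := by
      rw [sum_comm]; simp_rw [sum_mul]
    show ∑ j, ∑ k ∈ range (E + 2), D k j * p ^ k = _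
    rw [hcols, sum_range_succ, hlast]
    rw [pow_succ p (E + 1)] at hP ⊢
    zify [hP, hc, (by omega : 1 ≤ p)] at hX ⊢
    linear_combination hX
  · rw [hres i (by omega)]
    have hX := hpart i hi (by omega)
    have hP : 1 ≤ p ^ i := Nat.one_le_pow _ _ (by omega)
    have hrP : r ≤ r * p ^ i := Nat.le_mul_of_pos_right r hP
    rw [Nat.mul_sub_one]
    rw [add_one_mul] at hX
    omega

lemma card_digitColumns_pow_le_cSeq {p r m : ℕ} (E : ℕ) (hp : 2 ≤ p) (hr : 1 ≤ r)
    (hrm : r + 2 ≤ m) : #(digitColumns p m ((r + 1) * (p - 1))) ^ E ≤ cSeq p r m (E + 2) := by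
  obtain ⟨c₀, hc₀⟩ := digitColumns_nonempty (p := p) (m := m) (S := r * (p - 1) + p) (by omega) (by
    calc r * (p - 1) + p = (r + 1) * (p - 1) + 1 := by rw [add_one_mul]; omega
      _ ≤ (r + 1) * (p - 1) + (p - 1) := by omega
      _ ≤ m * (p - 1) := by rw [← add_one_mul]; exact Nat.mul_le_mul_right _ hrm)
  obtain ⟨c₁, hc₁⟩ := digitColumns_nonempty (p := p) (m := m) (S := r * (p - 1) - 1) (by omega)
    (le_trans (Nat.sub_le _ _) (Nat.mul_le_mul_right _ (by omega)))
  rw [mem_digitColumns] at hc₀ hc₁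
  let D : (Fin E → Fin m → ℕ) → ℕ → Fin m → ℕ := fun w k =>
    if k = 0 then c₀ else if h : k - 1 < E then w ⟨k - 1, h⟩ else c₁
  let W := Fintype.piFinset fun _ : Fin E => digitColumns p m ((r + 1) * (p - 1))
  have hW : ∀ w ∈ W, ∀ i, (∀ j, w i j < p) ∧ ∑ j, w i j = (r + 1) * (p - 1) := fun w hw i =>
    mem_digitColumns.1 (Fintype.mem_piFinset.1 hw i)
  have hD : ∀ w ∈ W, ∀ k j, D w k j < p := by
    intro w hw k j
    simp only [D]
    split_ifs
    exacts [hc₀.1 j, (hW w hw _).1 j, hc₁.1 j]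
  rw [← Fintype.card_piFinset_const, cSeq_eq_ncard, ← Set.ncard_coe_finset]
  refine Set.ncard_le_ncard_of_injOn (fun w j => ∑ k ∈ range (E + 2), D w k j * p ^ k)
    (fun w hw => digits_mem_cTuples hp hr (hD w hw) ?_ (fun k hk hkE => ?_) ?_)
    (fun w hw w' hw' h => ?_) (cTuples_finite p r m _)
  · simpa [D] using hc₀.2
  · have hk0 : k ≠ 0 := by omega
    simpa [D, hk0, (by omega : k - 1 < E)] using (hW w hw ⟨k - 1, by omega⟩).2
  · simpa [D] using hc₁.2
  · funext i j
    have := digit_eq_of_sum_digit_mul_pow_eq (k := i + 1) (fun k _ => hD w hw k j)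
      (fun k _ => hD w' hw' k j) (congrFun h j) (by omega)
    simpa [D] using this

lemma tendsto_mul_pow_rpow_inv {a A : ℝ} (ha : 0 < a) (hA : 0 ≤ A) :
    Tendsto (fun e : ℕ => (a * A ^ e) ^ (e : ℝ)⁻¹) atTop (𝓝 A) := by
  have hroot : Tendsto (fun e : ℕ => a ^ (e : ℝ)⁻¹ * A) atTop (𝓝 A) := by
    simpa using ((Real.continuousAt_const_rpow ha.ne').tendsto.comp
      (tendsto_inv_atTop_zero.comp tendsto_natCast_atTop_atTop)).mul_const A
  refine hroot.congr' ((eventually_ne_atTop 0).mono fun e he => ?_)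
  dsimp only
  rw [Real.mul_rpow ha.le (by positivity), Real.pow_rpow_inv_natCast hA he]

lemma limsup_rpow_inv_mem_Icc {u : ℕ → ℝ} {a b A K : ℝ} (ha : 0 < a) (hb : 0 < b)
    (hA : 0 ≤ A) (hK : 0 ≤ K) (hlow : ∀ᶠ e in atTop, a * A ^ e ≤ u e)
    (hup : ∀ᶠ e in atTop, u e ≤ b * K ^ e) :
    IsBoundedUnder (· ≤ ·) atTop (fun e : ℕ => u e ^ (e : ℝ)⁻¹) ∧
      limsup (fun e : ℕ => u e ^ (e : ℝ)⁻¹) atTop ∈ Set.Icc A K := by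
  have hlow' : (fun e : ℕ => (a * A ^ e) ^ (e : ℝ)⁻¹) ≤ᶠ[atTop] fun e => u e ^ (e : ℝ)⁻¹ :=
    hlow.mono fun e he => Real.rpow_le_rpow (by positivity) he (by positivity)
  have hup' : (fun e : ℕ => u e ^ (e : ℝ)⁻¹) ≤ᶠ[atTop] fun e => (b * K ^ e) ^ (e : ℝ)⁻¹ :=
    hlow.mp <| hup.mono fun e he hle =>
      Real.rpow_le_rpow ((by positivity : 0 ≤ a * A ^ e).trans hle) he (by positivity)
  have hA' := tendsto_mul_pow_rpow_inv ha hA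
  have hK' := tendsto_mul_pow_rpow_inv hb hK
  have hbdd := hK'.isBoundedUnder_le.mono_le hup'
  refine ⟨hbdd, ?_, ?_⟩
  · rw [← hA'.limsup_eq]
    exact limsup_le_limsup hlow' hA'.isBoundedUnder_ge.isCoboundedUnder_le hbdd
  · rw [← hK'.limsup_eq]
    exact limsup_le_limsup hup'
      (hA'.isBoundedUnder_ge.mono_ge hlow').isCoboundedUnder_le hK'.isBoundedUnder_le

lemma tendsto_log_div_log_of_bounds {f : ℕ → ℝ} {c : ℝ} {n : ℕ} (hc : 0 < c)
    (hf : ∀ᶠ p : ℕ in atTop, (c * p) ^ n ≤ f p ∧ f p ≤ (p : ℝ) ^ n) :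
    Tendsto (fun p : ℕ => Real.log (f p) / Real.log p) atTop (𝓝 n) := by
  have hlog : Tendsto (fun p : ℕ => Real.log p) atTop atTop :=
    Real.tendsto_log_atTop.comp tendsto_natCast_atTop_atTop
  have hlower : Tendsto (fun p : ℕ => n * Real.log c / Real.log p + n) atTop (𝓝 n) := by
    simpa using (tendsto_const_nhds.div_atTop hlog).add_const (n : ℝ)
  refine tendsto_of_tendsto_of_tendsto_of_le_of_le' hlower tendsto_const_nhds ?_ ?_
  all_goals
    filter_upwards [hf, eventually_ge_atTop 2] with p ⟨hfl, hfu⟩ hp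
    have hp1 : (1 : ℝ) < p := by exact_mod_cast hp
    have hlogp : 0 < Real.log p := Real.log_pos hp1
    have hfpos : 0 < f p := lt_of_lt_of_le (by positivity) hfl
  · rw [div_add' _ _ _ hlogp.ne', div_le_div_iff_of_pos_right hlogp]
    calc n * Real.log c + n * Real.log p = Real.log ((c * p) ^ n) := by
          rw [Real.log_pow, Real.log_mul hc.ne' (by positivity)]; ring
      _ ≤ Real.log (f p) := Real.log_le_log (by positivity) hfl
  · rw [div_le_iff₀ hlogp, ← Real.log_pow]
    exact Real.log_le_log hfpos hfu

lemma isBoundedUnder_and_Lam_mem_Icc {r n p : ℕ} (hr : 1 ≤ r) (hrn : r + 1 ≤ n) (hp : 2 * n ≤ p) :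
    IsBoundedUnder (· ≤ ·) atTop (fun e : ℕ => (cSeq p r (n + 1) e : ℝ) ^ (e : ℝ)⁻¹) ∧
      Lam r (n + 1) p ∈ Set.Icc (((2 * n : ℝ)⁻¹ * p) ^ n) ((p : ℝ) ^ n) := by
  set N := #(digitColumns p (n + 1) ((r + 1) * (p - 1)))
  have hpN : (p / n) ^ n ≤ N := pow_div_le_card_digitColumns (by omega) hrn
  have hquot : p ≤ 2 * n * (p / n) := by
    have hrem := Nat.lt_div_mul_add (a := p) (b := n) (by omega)
    have hquot_pos : 1 ≤ p / n := (Nat.one_le_div_iff (by omega)).2 (by omega)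
    nlinarith
  have hNpos : (0 : ℝ) < N := by
    exact_mod_cast (Nat.one_le_pow _ _ (Nat.div_pos (by omega) (by omega))).trans hpN
  have hlow : ∀ᶠ e in atTop, ((N : ℝ) ^ 2)⁻¹ * N ^ e ≤ cSeq p r (n + 1) e := by
    filter_upwards [eventually_ge_atTop 2] with e he
    obtain ⟨E, rfl⟩ := Nat.exists_eq_add_of_le' he
    have := card_digitColumns_pow_le_cSeq (p := p) E (by omega) hr (by omega : r + 2 ≤ n + 1)
    calc ((N : ℝ) ^ 2)⁻¹ * N ^ (E + 2) = N ^ E := by field_simp; ring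
      _ ≤ cSeq p r (n + 1) (E + 2) := by exact_mod_cast this
  have hup (e : ℕ) : (cSeq p r (n + 1) e : ℝ) ≤ r ^ n * ((p : ℝ) ^ n) ^ e := by
    exact_mod_cast cSeq_le_mul_pow n e (by omega) hr
  obtain ⟨hbdd, hmem⟩ := limsup_rpow_inv_mem_Icc (by positivity) (pow_pos (Nat.cast_pos.2 hr) n)
    hNpos.le (by positivity) hlow (Eventually.of_forall hup)
  refine ⟨hbdd, le_trans ?_ hmem.1, hmem.2⟩
  have hn : (0 : ℝ) < n := Nat.cast_pos.2 (by omega)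
  calc ((2 * n : ℝ)⁻¹ * p) ^ n ≤ ((p / n : ℕ) : ℝ) ^ n := by
        gcongr
        rw [inv_mul_le_iff₀ (by positivity)]
        exact_mod_cast hquot
    _ ≤ N := by exact_mod_cast hpN

/-- for `1 ≤ r ≤ m−2`, the complexity `Λ_p` is finite (the sequence
is bounded) and positive for all sufficiently large primes `p`, and
`log Λ_p / log p → m−1` as `p → ∞` through the primes.  Equivalently, the
Frobenius complexity of the determinantal ring `S_{m,n}` (with `n = m−r`)
tends to `m−1` as `p → ∞`. -/
theorem stmt_19 (r m : ℕ) (hr : 1 ≤ r) (hrm : r ≤ m - 2) :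
    (∀ᶠ p : ℕ in Filter.atTop ⊓ Filter.principal {p : ℕ | p.Prime},
      0 < Lam r m p ∧
      Filter.IsBoundedUnder (· ≤ ·) Filter.atTop
        (fun e : ℕ => (cSeq p r m e : ℝ) ^ ((e : ℝ)⁻¹))) ∧
    Filter.Tendsto (fun p : ℕ => Real.log (Lam r m p) / Real.log p)
      (Filter.atTop ⊓ Filter.principal {p : ℕ | p.Prime})
      (nhds ((m : ℝ) - 1)) := by
  obtain ⟨n, rfl⟩ : ∃ n, m = n + 1 := ⟨m - 1, by omega⟩
  have hn : (0 : ℝ) < n := Nat.cast_pos.2 (by omega)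
  have hbounds := (eventually_ge_atTop (2 * n)).mono fun p hp =>
    isBoundedUnder_and_Lam_mem_Icc (p := p) hr (by omega : r + 1 ≤ n) hp
  refine ⟨?_, ?_⟩
  · filter_upwards [(hbounds.and (eventually_gt_atTop 0)).filter_mono inf_le_left]
      with p ⟨⟨hbdd, hlow, _⟩, hp⟩
    have : (0 : ℝ) < p := Nat.cast_pos.2 hp
    exact ⟨lt_of_lt_of_le (by positivity) hlow, hbdd⟩
  · rw [Nat.cast_add_one, add_sub_cancel_right]
    exact (tendsto_log_div_log_of_bounds (by positivity)
      (hbounds.mono fun p h => h.2)).mono_left inf_le_left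
end
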